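/- arXiv:2108.08813 — 5 statements merged into one kernel-verified Lean document; each statement's English description precedes it below -/
import Mathlib

section
/- If W = (W_1,...,W_p) is a random vector in R^p and N ⊆ {1,...,p} is a set of indices such that W is equal in distribution to ε ⊙ W for every deterministic sign vector ε ∈ {-1,1}^p with ε_j = 1 for all j ∉ N, then conditional on (|W_1|,...,|W_p|), the signs of (W_j)_{j ∈ N} restricted to coordinates with W_j ≠ 0 are i.i.d. uniform on {-1,+1}, and they are independent of the signs of (W_j)_{j ∉ N}. -/
open MeasureTheory ProbabilityTheory
open scoped Classical

lemma measurable_realSign : Measurable Real.sign := by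
  have : Real.sign = fun r : ℝ => if r < 0 then (-1:ℝ) else if 0 < r then 1 else 0 := by
    funext r; rw [Real.sign]
  rw [this]
  exact Measurable.ite measurableSet_Iio measurable_const
    (Measurable.ite measurableSet_Ioi measurable_const measurable_const)

/-- σ-algebra of sets invariant under a map. -/
def invSigma {α : Type*} (T : α → α) : MeasurableSpace α where
  MeasurableSet' S := T ⁻¹' S = S
  measurableSet_empty := rfl
  measurableSet_compl := fun S h => by show T ⁻¹' Sᶜ = Sᶜ; rw [Set.preimage_compl, h]
  measurableSet_iUnion := fun f h => by
    show T ⁻¹' (⋃ i, f i) = ⋃ i, f i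
    rw [Set.preimage_iUnion]; exact Set.iUnion_congr h

lemma sign_pattern_measurable {p : ℕ} (F : Finset (Fin p)) (c : Fin p → ℝ) :
    MeasurableSet {x : Fin p → ℝ | ∀ j ∈ F, Real.sign (x j) = c j} := by
  have h : {x : Fin p → ℝ | ∀ j ∈ F, Real.sign (x j) = c j}
      = ⋂ j ∈ F, (fun x : Fin p → ℝ => Real.sign (x j)) ⁻¹' {c j} := by
    ext x; simp
  rw [h]
  exact MeasurableSet.biInter F.countable_toSet fun j _ =>
    (measurable_realSign.comp (measurable_pi_apply j)) (measurableSet_singleton _)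

lemma key_measure_eq {p : ℕ} (ν : Measure (Fin p → ℝ)) (N : Set (Fin p))
    (hflip : ∀ ε : Fin p → ℝ, (∀ j, ε j = 1 ∨ ε j = -1) → (∀ j ∉ N, ε j = 1) →
      ∀ X : Set (Fin p → ℝ), MeasurableSet X → ν ((fun x j => ε j * x j) ⁻¹' X) = ν X)
    (F : Finset (Fin p)) (hFN : ↑F ⊆ N) (s : Fin p → ℝ) (hs : ∀ j ∈ F, s j = 1 ∨ s j = -1)
    (S : Set (Fin p → ℝ)) (hSmeas : MeasurableSet S)
    (hSinv : ∀ ε : Fin p → ℝ, (∀ j, ε j = 1 ∨ ε j = -1) → (∀ j ∉ N, ε j = 1) →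
      (fun x j => ε j * x j) ⁻¹' S = S) :
    ν ({x | ∀ j ∈ F, x j ≠ 0} ∩ S)
      = 2 ^ F.card * ν ({x | ∀ j ∈ F, Real.sign (x j) = s j} ∩ S) := by
  set A' : Set (Fin p → ℝ) := {x | ∀ j ∈ F, Real.sign (x j) = s j} with hA'
  -- sign flip vectors indexed by subsets of F
  set ε : Finset (Fin p) → Fin p → ℝ := fun G j => if j ∈ G then (-1:ℝ) else 1 with hε
  have hε1 : ∀ G, ∀ j, ε G j = 1 ∨ ε G j = -1 := by
    intro G j; by_cases h : j ∈ G <;> simp [hε, h]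
  have hεN : ∀ G : Finset (Fin p), G ⊆ F → ∀ j ∉ N, ε G j = 1 := by
    intro G hGF j hj
    have : j ∉ G := fun h => hj (hFN (hGF h))
    simp [hε, this]
  set f : Finset (Fin p) → Set (Fin p → ℝ) :=
    fun G => {x | ∀ j ∈ F, Real.sign (x j) = ε G j * s j} ∩ S with hf
  have hsne : ∀ j ∈ F, s j ≠ 0 := by
    intro j hj; rcases hs j hj with h|h <;> rw [h] <;> norm_num
  have hpre : ∀ G : Finset (Fin p), (fun (x : Fin p → ℝ) (j : Fin p) => ε G j * x j) ⁻¹' A'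
      = {x | ∀ j ∈ F, Real.sign (x j) = ε G j * s j} := by
    intro G
    ext x
    simp only [Set.mem_preimage, hA', Set.mem_setOf_eq]
    refine forall₂_congr fun j hj => ?_
    by_cases hjG : j ∈ G
    · simp [hε, hjG, neg_one_mul, Real.sign_neg, neg_eq_iff_eq_neg]
    · simp [hε, hjG]
  have hν : ∀ G : Finset (Fin p), G ⊆ F → ν (f G) = ν (A' ∩ S) := by
    intro G hGF
    have h := hflip (ε G) (hε1 G) (hεN G hGF) (A' ∩ S)
      ((sign_pattern_measurable F s).inter hSmeas)
    rw [Set.preimage_inter, hpre G, hSinv (ε G) (hε1 G) (hεN G hGF)] at h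
    simpa only [hf] using h
  have hcover : {x : Fin p → ℝ | ∀ j ∈ F, x j ≠ 0} ∩ S = ⋃ G ∈ F.powerset, f G := by
    ext x
    simp only [Set.mem_inter_iff, Set.mem_iUnion, Finset.mem_powerset, Set.mem_setOf_eq, hf]
    constructor
    · rintro ⟨hx, hxS⟩
      refine ⟨F.filter (fun j => Real.sign (x j) ≠ s j), Finset.filter_subset _ _,
        fun j hj => ?_, hxS⟩
      have hsgn : Real.sign (x j) = 1 ∨ Real.sign (x j) = -1 := by
        rcases (hx j hj).lt_or_gt with h|h
        · exact Or.inr (Real.sign_of_neg h)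
        · exact Or.inl (Real.sign_of_pos h)
      by_cases hsj : Real.sign (x j) = s j
      · have hnot : j ∉ F.filter (fun j => Real.sign (x j) ≠ s j) := by
          simp [Finset.mem_filter, hsj]
        simp [hε, hnot, hsj]
      · have hmem : j ∈ F.filter (fun j => Real.sign (x j) ≠ s j) :=
          Finset.mem_filter.mpr ⟨hj, hsj⟩
        have hεv : ε (F.filter (fun j => Real.sign (x j) ≠ s j)) j = -1 := by
          simp [hε, hmem]
        rw [hεv, neg_one_mul]
        rcases hs j hj with h1|h1 <;> rcases hsgn with h2|h2 <;> simp_all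
    · rintro ⟨G, hGF, hxf, hxS⟩
      refine ⟨fun j hj h0 => ?_, hxS⟩
      have h := hxf j hj
      rw [h0, Real.sign_zero] at h
      have : ε G j * s j ≠ 0 := by
        rcases hε1 G j with h1|h1 <;> rw [h1] <;> simpa using hsne j hj
      exact this h.symm
  have hdisj : (↑F.powerset : Set (Finset (Fin p))).PairwiseDisjoint f := by
    intro G hG G' hG' hne
    rw [Finset.mem_coe, Finset.mem_powerset] at hG hG'
    refine Set.disjoint_left.mpr ?_
    rintro x ⟨hxf, _⟩ ⟨hxf', _⟩
    have hj : ∃ j, ¬ (j ∈ G ↔ j ∈ G') := by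
      by_contra h; push_neg at h; exact hne (Finset.ext h)
    obtain ⟨j, hj⟩ := hj
    by_cases hjG : j ∈ G <;> by_cases hjG' : j ∈ G'
    · exact hj (iff_of_true hjG hjG')
    · have hjF : j ∈ F := hG hjG
      have h := (hxf j hjF).symm.trans (hxf' j hjF)
      simp only [hε, if_pos hjG, if_neg hjG', neg_one_mul, one_mul] at h
      exact hsne j hjF (by linarith)
    · have hjF : j ∈ F := hG' hjG'
      have h := (hxf j hjF).symm.trans (hxf' j hjF)
      simp only [hε, if_neg hjG, if_pos hjG', neg_one_mul, one_mul] at h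
      exact hsne j hjF (by linarith)
    · exact hj (iff_of_false hjG hjG')
  calc ν ({x : Fin p → ℝ | ∀ j ∈ F, x j ≠ 0} ∩ S) = ν (⋃ G ∈ F.powerset, f G) := by
        rw [hcover]
    _ = ∑ G ∈ F.powerset, ν (f G) :=
        measure_biUnion_finset hdisj
          (fun G _ => (sign_pattern_measurable F (fun j => ε G j * s j)).inter hSmeas)
    _ = ∑ _G ∈ F.powerset, ν (A' ∩ S) :=
        Finset.sum_congr rfl fun G hG => hν G (Finset.mem_powerset.mp hG)
    _ = 2 ^ F.card * ν (A' ∩ S) := by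
        rw [Finset.sum_const, Finset.card_powerset, nsmul_eq_mul]
        push_cast
        ring

/-- The σ-algebra on `ℝ^p` generated by coordinate absolute values and off-`N` signs. -/
noncomputable def mSig0 (p : ℕ) (N : Set (Fin p)) : MeasurableSpace (Fin p → ℝ) :=
  MeasurableSpace.comap (fun x => fun j : Fin p => |x j|) inferInstance ⊔
    MeasurableSpace.comap
      (fun x => fun j : {j : Fin p // j ∉ N} => Real.sign (x (j : Fin p))) inferInstance

lemma mSig0_def (p : ℕ) (N : Set (Fin p)) : mSig0 p N =
    MeasurableSpace.comap (fun x => fun j : Fin p => |x j|) inferInstance ⊔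
      MeasurableSpace.comap
        (fun x => fun j : {j : Fin p // j ∉ N} => Real.sign (x (j : Fin p))) inferInstance :=
  rfl

theorem sign_symmetry_gives_conditional_coin_flips {Ω : Type*} [mΩ : MeasurableSpace Ω]
    (μ : Measure Ω) [IsProbabilityMeasure μ] (p : ℕ) (W : Ω → Fin p → ℝ)
    (hW : Measurable W) (N : Set (Fin p))
    (hsym : ∀ ε : Fin p → ℝ, (∀ j, ε j = 1 ∨ ε j = -1) → (∀ j ∉ N, ε j = 1) →
      Measure.map (fun ω => fun j => ε j * W ω j) μ = Measure.map W μ) :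
    ∀ F : Finset (Fin p), ↑F ⊆ N → ∀ s : Fin p → ℝ, (∀ j ∈ F, s j = 1 ∨ s j = -1) →
      ∀ᵐ ω ∂μ, (∀ j ∈ F, W ω j ≠ 0) →
        (μ[fun ω' => if ∀ j ∈ F, Real.sign (W ω' j) = s j then (1 : ℝ) else 0 |
            MeasurableSpace.comap (fun ω' => fun j : Fin p => |W ω' j|) inferInstance ⊔
              MeasurableSpace.comap
                (fun ω' => fun j : {j : Fin p // j ∉ N} => Real.sign (W ω' (j : Fin p)))
                inferInstance]) ω
          = (1/2 : ℝ) ^ F.card := by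
  intro F hFN s hs
  have hφm : Measurable (fun x : Fin p → ℝ => fun j => |x j|) :=
    measurable_pi_lambda _ fun j => (measurable_pi_apply j).abs
  have hψm : Measurable
      (fun x : Fin p → ℝ => fun j : {j : Fin p // j ∉ N} => Real.sign (x (j : Fin p))) :=
    measurable_pi_lambda _ fun j => measurable_realSign.comp (measurable_pi_apply _)
  have hmW : (MeasurableSpace.comap (fun ω' : Ω => fun j : Fin p => |W ω' j|) inferInstance ⊔
        MeasurableSpace.comap
          (fun ω' : Ω => fun j : {j : Fin p // j ∉ N} => Real.sign (W ω' (j : Fin p)))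
          inferInstance)
      = MeasurableSpace.comap W (mSig0 p N) := by
    rw [mSig0_def]
    conv_rhs => rw [MeasurableSpace.comap_sup]
    congr 1
    · exact (MeasurableSpace.comap_comp
        (f := fun x : Fin p → ℝ => fun j : Fin p => |x j|) (g := W)).symm
    · exact (MeasurableSpace.comap_comp
        (f := fun x : Fin p → ℝ => fun j : {j : Fin p // j ∉ N} => Real.sign (x (j : Fin p)))
        (g := W)).symm
  rw [hmW]
  have hm0_le : mSig0 p N ≤ MeasurableSpace.pi := by
    rw [mSig0_def]; exact sup_le hφm.comap_le hψm.comap_le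
  have hm_le : MeasurableSpace.comap W (mSig0 p N) ≤ mΩ :=
    (MeasurableSpace.comap_mono hm0_le).trans hW.comap_le
  have hν : IsProbabilityMeasure (Measure.map W μ) := Measure.isProbabilityMeasure_map hW.aemeasurable
  have hflip : ∀ ε : Fin p → ℝ, (∀ j, ε j = 1 ∨ ε j = -1) → (∀ j ∉ N, ε j = 1) →
      ∀ X : Set (Fin p → ℝ), MeasurableSet X →
        Measure.map W μ ((fun x (j : Fin p) => ε j * x j) ⁻¹' X) = Measure.map W μ X := by
    intro ε h1 h2 X hX
    have hTm : Measurable (fun x : Fin p → ℝ => fun j => ε j * x j) :=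
      measurable_pi_lambda _ fun j => (measurable_pi_apply j).const_mul _
    have hmap : Measure.map (fun x : Fin p → ℝ => fun j => ε j * x j) (Measure.map W μ)
        = Measure.map W μ := by
      rw [Measure.map_map hTm hW]
      exact hsym ε h1 h2
    conv_rhs => rw [← hmap]
    rw [Measure.map_apply hTm hX]
  have hSinv : ∀ ε : Fin p → ℝ, (∀ j, ε j = 1 ∨ ε j = -1) → (∀ j ∉ N, ε j = 1) →
      ∀ S : Set (Fin p → ℝ), MeasurableSet[mSig0 p N] S →
        (fun x (j : Fin p) => ε j * x j) ⁻¹' S = S := by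
    intro ε h1 h2
    have hle : mSig0 p N ≤ invSigma (fun x (j : Fin p) => ε j * x j) := by
      rw [mSig0_def]
      apply sup_le
      · rintro S ⟨U, hU, rfl⟩
        show (fun (x : Fin p → ℝ) (j : Fin p) => ε j * x j) ⁻¹'
            ((fun (x : Fin p → ℝ) (j : Fin p) => |x j|) ⁻¹' U)
          = (fun (x : Fin p → ℝ) (j : Fin p) => |x j|) ⁻¹' U
        rw [← Set.preimage_comp]
        have he : ((fun (x : Fin p → ℝ) (j : Fin p) => |x j|)
              ∘ (fun (x : Fin p → ℝ) (j : Fin p) => ε j * x j))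
            = fun (x : Fin p → ℝ) (j : Fin p) => |x j| := by
          funext x j
          show |ε j * x j| = |x j|
          rcases h1 j with h|h <;> rw [h] <;> simp
        rw [he]
      · rintro S ⟨U, hU, rfl⟩
        show (fun (x : Fin p → ℝ) (j : Fin p) => ε j * x j) ⁻¹'
            ((fun (x : Fin p → ℝ) (j : {j : Fin p // j ∉ N}) => Real.sign (x (j : Fin p))) ⁻¹' U)
          = (fun (x : Fin p → ℝ) (j : {j : Fin p // j ∉ N}) => Real.sign (x (j : Fin p))) ⁻¹' U
        rw [← Set.preimage_comp]
        have he : ((fun (x : Fin p → ℝ) (j : {j : Fin p // j ∉ N}) => Real.sign (x (j : Fin p)))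
              ∘ (fun (x : Fin p → ℝ) (j : Fin p) => ε j * x j))
            = fun (x : Fin p → ℝ) (j : {j : Fin p // j ∉ N}) => Real.sign (x (j : Fin p)) := by
          funext x j
          show Real.sign (ε (j : Fin p) * x (j : Fin p)) = Real.sign (x (j : Fin p))
          rw [h2 (j : Fin p) j.2, one_mul]
        rw [he]
    exact fun S hS => hle S hS
  set A' : Set (Fin p → ℝ) := {x | ∀ j ∈ F, Real.sign (x j) = s j} with hA'
  set B' : Set (Fin p → ℝ) := {x | ∀ j ∈ F, x j ≠ 0} with hB'
  have hA'meas : MeasurableSet A' := sign_pattern_measurable F s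
  have hBsetmeas : MeasurableSet {y : Fin p → ℝ | ∀ j ∈ F, y j ≠ 0} := by
    have h : {y : Fin p → ℝ | ∀ j ∈ F, y j ≠ 0}
        = ⋂ j ∈ F, (fun y : Fin p → ℝ => y j) ⁻¹' ({0}ᶜ) := by
      ext y; simp
    rw [h]
    exact MeasurableSet.biInter F.countable_toSet fun j _ =>
      (measurable_pi_apply j) (measurableSet_singleton 0).compl
  have hB'meas : MeasurableSet B' := by rw [hB']; exact hBsetmeas
  have hB'm0 : MeasurableSet[mSig0 p N] B' := by
    have hmem : MeasurableSet[MeasurableSpace.comap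
        (fun x : Fin p → ℝ => fun j : Fin p => |x j|) inferInstance] B' := by
      refine ⟨{y | ∀ j ∈ F, y j ≠ 0}, hBsetmeas, ?_⟩
      ext x
      simp [hB', abs_ne_zero]
    have hle : MeasurableSpace.comap (fun x : Fin p → ℝ => fun j : Fin p => |x j|)
        inferInstance ≤ mSig0 p N := by rw [mSig0_def]; exact le_sup_left
    exact hle _ hmem
  have hBm : MeasurableSet[MeasurableSpace.comap W (mSig0 p N)] (W ⁻¹' B') :=
    ⟨B', hB'm0, rfl⟩
  -- the candidate conditional expectation
  set g : Ω → ℝ := (W ⁻¹' B').indicator (fun _ => (1/2:ℝ)^F.card) with hg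
  have hg_int : Integrable g μ := (integrable_const _).indicator (hW hB'meas)
  have hg_meas' : AEStronglyMeasurable[MeasurableSpace.comap W (mSig0 p N)] g μ :=
    StronglyMeasurable.aestronglyMeasurable
      ((stronglyMeasurable_const :
          StronglyMeasurable[MeasurableSpace.comap W (mSig0 p N)]
            fun _ : Ω => (1/2:ℝ)^F.card).indicator hBm)
  have hfA_int : Integrable ((W ⁻¹' A').indicator (fun _ => (1:ℝ))) μ :=
    (integrable_const _).indicator (hW hA'meas)
  haveI : SigmaFinite (μ.trim hm_le) := by
    haveI : IsFiniteMeasure (μ.trim hm_le) := isFiniteMeasure_trim hm_le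
    infer_instance
  have hg_eq : ∀ C : Set Ω, MeasurableSet[MeasurableSpace.comap W (mSig0 p N)] C → μ C < ⊤ →
      ∫ x in C, g x ∂μ = ∫ x in C, (W ⁻¹' A').indicator (fun _ => (1:ℝ)) x ∂μ := by
    intro C hC _
    obtain ⟨S, hSm0, rfl⟩ := hC
    have hSmeas : MeasurableSet S := hm0_le S hSm0
    have key := key_measure_eq (Measure.map W μ) N hflip F hFN s hs S hSmeas
      (fun ε h1 h2 => hSinv ε h1 h2 S hSm0)
    rw [hg, setIntegral_indicator (hW hB'meas), setIntegral_indicator (hW hA'meas),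
      setIntegral_const, setIntegral_const]
    have e1 : μ (W ⁻¹' S ∩ W ⁻¹' A') = Measure.map W μ (A' ∩ S) := by
      rw [← Set.preimage_inter, Measure.map_apply hW (hA'meas.inter hSmeas)]
      rw [Set.inter_comm]
    have e2 : μ (W ⁻¹' S ∩ W ⁻¹' B') = Measure.map W μ (B' ∩ S) := by
      rw [← Set.preimage_inter, Measure.map_apply hW (hB'meas.inter hSmeas)]
      rw [Set.inter_comm]
    have e3 : (Measure.map W μ (B' ∩ S)).toReal
        = 2 ^ F.card * (Measure.map W μ (A' ∩ S)).toReal := by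
      rw [key, ENNReal.toReal_mul]
      simp
      rfl
    rw [measureReal_def, measureReal_def, e1, e2, e3, smul_eq_mul, smul_eq_mul, mul_one, mul_comm ((2:ℝ)^F.card) _, mul_assoc]
    have h1 : (2:ℝ) ^ F.card * (1/2:ℝ)^F.card = 1 := by
      rw [one_div, inv_pow, mul_inv_cancel₀ (by positivity)]
    rw [h1, mul_one]
  have hcond : g =ᵐ[μ]
      μ[(W ⁻¹' A').indicator (fun _ => (1:ℝ)) | MeasurableSpace.comap W (mSig0 p N)] :=
    ae_eq_condExp_of_forall_setIntegral_eq hm_le hfA_int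
      (fun C _ _ => hg_int.integrableOn) hg_eq hg_meas'
  have hfI_ae : (W ⁻¹' A').indicator (fun _ => (1:ℝ))
      =ᵐ[μ] fun ω' => if ∀ j ∈ F, Real.sign (W ω' j) = s j then (1 : ℝ) else 0 := by
    refine Filter.EventuallyEq.of_eq ?_
    funext ω'
    by_cases h : ∀ j ∈ F, Real.sign (W ω' j) = s j
    · have hmem : ω' ∈ W ⁻¹' A' := by
        simp only [Set.mem_preimage, hA', Set.mem_setOf_eq]; exact h
      rw [Set.indicator_of_mem hmem, if_pos h]
    · have hmem : ω' ∉ W ⁻¹' A' := by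
        simp only [Set.mem_preimage, hA', Set.mem_setOf_eq]; exact h
      rw [Set.indicator_of_notMem hmem, if_neg h]
  have hcond2 : g =ᵐ[μ]
      μ[(fun ω' => if ∀ j ∈ F, Real.sign (W ω' j) = s j then (1 : ℝ) else 0) |
        MeasurableSpace.comap W (mSig0 p N)] :=
    hcond.trans (condExp_congr_ae hfI_ae)
  filter_upwards [hcond2] with ω hω hωB
  rw [← hω, hg]
  have hmem : ω ∈ W ⁻¹' B' := by
    simp only [Set.mem_preimage, hB', Set.mem_setOf_eq]; exact hωB
  exact Set.indicator_of_mem hmem _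
end

section
/- Let σ_1,...,σ_p be i.i.d. random variables uniform on {-1,+1}. For q ∈ (0,1), define the stopping threshold T = min{ t ∈ {1,...,p} : (1 + #{j : σ_j = -1 and j ≥ t})/max(#{j : σ_j = +1 and j ≥ t}, 1) ≤ q }, with T = ∞ if no such t exists, and let the rejection set be R = {j ≥ T : σ_j = +1} (empty if T = ∞). Then, when all indices are null, E[ #{j ∈ R : σ_j = +1}/max(#{j : σ_j = +1, j ≥ T}, 1) ] ≤ q. -/
open MeasureTheory ProbabilityTheory Finset
open scoped Classical

/-- Feasible stopping indices of the knockoff filter (SeqStep+) applied to a sign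
sequence `s ∈ {-1,+1}^p`: with 1-based `t ∈ {1,…,p}` written as 0-based `k = t-1`,
those `k` with `(1 + #{j ≥ t : s_j = -1}) / max(#{j ≥ t : s_j = +1}, 1) ≤ q`. -/
noncomputable def signFeasible (p : ℕ) (q : ℝ) (s : Fin p → ℝ) : Finset ℕ :=
  (Finset.range p).filter fun k =>
    (1 + ((univ.filter fun j : Fin p => k ≤ (j : ℕ) ∧ s j = -1).card : ℝ)) /
        max ((univ.filter fun j : Fin p => k ≤ (j : ℕ) ∧ s j = 1).card : ℝ) 1 ≤ q

/-- Rejection set of the knockoff filter applied to a sign sequence: the indices `j ≥ T`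
with `s_j = +1`, where `T` is the smallest feasible stopping index
(the empty set if no index is feasible, i.e. `T = ∞`). -/
noncomputable def signReject (p : ℕ) (q : ℝ) (s : Fin p → ℝ) : Finset (Fin p) :=
  if h : (signFeasible p q s).Nonempty then
    univ.filter fun j : Fin p => (signFeasible p q s).min' h ≤ (j : ℕ) ∧ s j = 1
  else ∅

noncomputable def bPlus (p : ℕ) (v : Fin p → Bool) (k : ℕ) : ℕ :=
  ∑ j : Fin p, if k ≤ (j : ℕ) ∧ v j = true then 1 else 0
noncomputable def bMinus (p : ℕ) (v : Fin p → Bool) (k : ℕ) : ℕ :=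
  ∑ j : Fin p, if k ≤ (j : ℕ) ∧ v j = false then 1 else 0
noncomputable def cnt (p : ℕ) (v : Fin p → Bool) : ℕ :=
  ∑ j : Fin p, if v j = true then 1 else 0
noncomputable def bFeas (p : ℕ) (q : ℝ) (v : Fin p → Bool) : Finset ℕ :=
  (Finset.range p).filter fun k =>
    (1 + (bMinus p v k : ℝ)) / max (bPlus p v k : ℝ) 1 ≤ q
noncomputable def bF (p : ℕ) (q : ℝ) (v : Fin p → Bool) : ℝ :=
  if h : (bFeas p q v).Nonempty then
    (bPlus p v ((bFeas p q v).min' h) : ℝ) / (1 + (bMinus p v ((bFeas p q v).min' h) : ℝ))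
  else 0

lemma bPlus_zero (p : ℕ) (v : Fin p → Bool) : bPlus p v 0 = cnt p v := by
  unfold bPlus cnt
  exact Finset.sum_congr rfl fun j _ => by simp

lemma cnt_add_bMinus (p : ℕ) (v : Fin p → Bool) : cnt p v + bMinus p v 0 = p := by
  unfold cnt bMinus
  rw [← Finset.sum_add_distrib]
  have h : ∀ j : Fin p,
      ((if v j = true then 1 else 0) + (if 0 ≤ (j : ℕ) ∧ v j = false then 1 else 0)) = 1 := by
    intro j; cases h : v j <;> simp [h]
  rw [Finset.sum_congr rfl fun j _ => h j, Finset.sum_const, card_univ, Fintype.card_fin,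
    smul_eq_mul, mul_one]

lemma cnt_le (p : ℕ) (v : Fin p → Bool) : cnt p v ≤ p := by
  have := cnt_add_bMinus p v; omega

lemma bMinus_zero (p : ℕ) (v : Fin p → Bool) : bMinus p v 0 = p - cnt p v := by
  have := cnt_add_bMinus p v; omega

lemma bPlus_le_cnt (p : ℕ) (v : Fin p → Bool) (k : ℕ) : bPlus p v k ≤ cnt p v := by
  unfold bPlus cnt
  apply Finset.sum_le_sum
  intro j _
  split_ifs with h1 h2
  · exact le_refl 1
  · exact absurd h1.2 h2
  · exact Nat.zero_le _
  · exact le_refl 0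

lemma bPlus_succ (p : ℕ) (b : Bool) (w : Fin p → Bool) (k : ℕ) :
    bPlus (p + 1) (Fin.cons b w) (k + 1) = bPlus p w k := by
  unfold bPlus
  rw [Fin.sum_univ_succ]
  simp [Fin.cons_succ, Nat.succ_le_succ_iff]

lemma bMinus_succ (p : ℕ) (b : Bool) (w : Fin p → Bool) (k : ℕ) :
    bMinus (p + 1) (Fin.cons b w) (k + 1) = bMinus p w k := by
  unfold bMinus
  rw [Fin.sum_univ_succ]
  simp [Fin.cons_succ, Nat.succ_le_succ_iff]

lemma cnt_cons_true (p : ℕ) (w : Fin p → Bool) :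
    cnt (p + 1) (Fin.cons true w) = cnt p w + 1 := by
  unfold cnt
  rw [Fin.sum_univ_succ]
  simp [Fin.cons_succ, add_comm]

lemma cnt_cons_false (p : ℕ) (w : Fin p → Bool) :
    cnt (p + 1) (Fin.cons false w) = cnt p w := by
  unfold cnt
  rw [Fin.sum_univ_succ]
  simp [Fin.cons_succ]

lemma mem_bFeas_succ (p : ℕ) (q : ℝ) (b : Bool) (w : Fin p → Bool) (k : ℕ) :
    (k + 1) ∈ bFeas (p + 1) q (Fin.cons b w) ↔ k ∈ bFeas p q w := by
  unfold bFeas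
  simp [bPlus_succ, bMinus_succ, Nat.succ_lt_succ_iff]

lemma zero_mem_bFeas (p : ℕ) (q : ℝ) (v : Fin p → Bool) :
    0 ∈ bFeas p q v ↔ 0 < p ∧
      (1 + ((p - cnt p v : ℕ) : ℝ)) / max ((cnt p v : ℕ) : ℝ) 1 ≤ q := by
  unfold bFeas
  simp [bPlus_zero, bMinus_zero, Finset.mem_filter, Finset.mem_range]

lemma bF_of_zero_mem (p : ℕ) (q : ℝ) (v : Fin p → Bool) (h0 : 0 ∈ bFeas p q v) :
    bF p q v = (cnt p v : ℝ) / (1 + ((p - cnt p v : ℕ) : ℝ)) := by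
  have hne : (bFeas p q v).Nonempty := ⟨0, h0⟩
  have hmin : (bFeas p q v).min' hne = 0 :=
    le_antisymm (Finset.min'_le _ _ h0) (Nat.zero_le _)
  unfold bF
  rw [dif_pos hne, hmin, bPlus_zero, bMinus_zero]

lemma bF_cons_not_zero (p : ℕ) (q : ℝ) (b : Bool) (w : Fin p → Bool)
    (h0 : 0 ∉ bFeas (p + 1) q (Fin.cons b w)) :
    bF (p + 1) q (Fin.cons b w) = bF p q w := by
  by_cases h : (bFeas p q w).Nonempty
  · have hne : (bFeas (p + 1) q (Fin.cons b w)).Nonempty := by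
      obtain ⟨k, hk⟩ := h
      exact ⟨k + 1, (mem_bFeas_succ p q b w k).2 hk⟩
    have hmmem := Finset.min'_mem _ hne
    have hmne : (bFeas (p + 1) q (Fin.cons b w)).min' hne ≠ 0 := fun he => h0 (he ▸ hmmem)
    obtain ⟨m', hm'⟩ : ∃ m', (bFeas (p + 1) q (Fin.cons b w)).min' hne = m' + 1 :=
      ⟨(bFeas (p + 1) q (Fin.cons b w)).min' hne - 1, by omega⟩
    have hm'mem : m' ∈ bFeas p q w := (mem_bFeas_succ p q b w m').1 (hm' ▸ hmmem)
    have hle : (bFeas p q w).min' h ≤ m' := Finset.min'_le _ _ hm'mem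
    have hge : m' ≤ (bFeas p q w).min' h := by
      have hmem2 : ((bFeas p q w).min' h) + 1 ∈ bFeas (p + 1) q (Fin.cons b w) :=
        (mem_bFeas_succ p q b w _).2 (Finset.min'_mem _ h)
      have := Finset.min'_le _ _ hmem2
      omega
    have heq : (bFeas p q w).min' h = m' := le_antisymm hle hge
    unfold bF
    rw [dif_pos hne, dif_pos h, hm', heq, bPlus_succ, bMinus_succ]
  · have hne : ¬ (bFeas (p + 1) q (Fin.cons b w)).Nonempty := by
      rintro ⟨m, hm⟩
      have hm0 : m ≠ 0 := fun he => h0 (he ▸ hm)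
      obtain ⟨m', rfl⟩ : ∃ m', m = m' + 1 := ⟨m - 1, by omega⟩
      exact h ⟨m', (mem_bFeas_succ p q b w m').1 hm⟩
    unfold bF
    rw [dif_neg hne, dif_neg h]

lemma bF_zero_of_cnt (p : ℕ) (q : ℝ) (v : Fin p → Bool) (h : cnt p v = 0) : bF p q v = 0 := by
  unfold bF
  split
  · rename_i hne
    have h0 : bPlus p v ((bFeas p q v).min' hne) = 0 := by
      have := bPlus_le_cnt p v ((bFeas p q v).min' hne); omega
    rw [h0]
    simp
  · rfl








lemma sum_cons_split (p : ℕ) (f : (Fin (p+1) → Bool) → ℝ) :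
    (∑ v : Fin (p+1) → Bool, f v)
      = (∑ w : Fin p → Bool, f (Fin.cons true w)) + ∑ w : Fin p → Bool, f (Fin.cons false w) := by
  rw [← Fintype.sum_equiv (Fin.consEquiv fun _ : Fin (p+1) => Bool)
      (fun x : Bool × (Fin p → Bool) => f (Fin.cons x.1 x.2)) f (fun x => rfl)]
  rw [Fintype.sum_prod_type, Fintype.sum_bool]

lemma sum_cnt_indicator (p : ℕ) : ∀ c : ℕ,
    (∑ v : Fin p → Bool, if cnt p v = c then (1 : ℝ) else 0) = p.choose c := by
  induction p with
  | zero =>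
    intro c
    have h1 : ∀ v : Fin 0 → Bool, cnt 0 v = 0 := fun v => by simp [cnt]
    rcases c with _ | c
    · rw [Finset.sum_congr rfl fun v _ => if_pos (h1 v), Finset.sum_const, card_univ]
      simp
    · rw [Finset.sum_eq_zero fun v _ => if_neg (by rw [h1 v]; omega)]
      simp
  | succ p ih =>
    intro c
    rw [sum_cons_split]
    rcases c with _ | d
    · rw [Finset.sum_eq_zero fun w _ => if_neg (by rw [cnt_cons_true]; omega)]
      have : (∑ w : Fin p → Bool, if cnt (p+1) (Fin.cons false w) = 0 then (1:ℝ) else 0)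
          = (∑ w : Fin p → Bool, if cnt p w = 0 then (1:ℝ) else 0) := by
        exact Finset.sum_congr rfl fun w _ => by rw [cnt_cons_false]
      rw [this, ih 0]
      simp
    · have hA : (∑ w : Fin p → Bool, if cnt (p+1) (Fin.cons true w) = d + 1 then (1:ℝ) else 0)
          = (∑ w : Fin p → Bool, if cnt p w = d then (1:ℝ) else 0) := by
        refine Finset.sum_congr rfl fun w _ => ?_
        rw [cnt_cons_true]
        exact if_congr (by omega) rfl rfl
      have hB : (∑ w : Fin p → Bool, if cnt (p+1) (Fin.cons false w) = d + 1 then (1:ℝ) else 0)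
          = (∑ w : Fin p → Bool, if cnt p w = d + 1 then (1:ℝ) else 0) :=
        Finset.sum_congr rfl fun w _ => by rw [cnt_cons_false]
      rw [hA, hB, ih d, ih (d+1)]
      rw [Nat.choose_succ_succ (p) (d)]
      push_cast
      ring

lemma choose_arith (p d : ℕ) :
    (p.choose d : ℝ) * d / (((p - d : ℕ) : ℝ) + 1)
      + (p.choose (d+1) : ℝ) * (d+1) / (((p - (d+1) : ℕ) : ℝ) + 1)
    ≤ ((p+1).choose (d+1) : ℝ) * (d+1) / ((((p+1) - (d+1) : ℕ) : ℝ) + 1) := by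
  rcases lt_trichotomy d p with h | h | h
  · -- d < p
    have h1 : ((p+1) - (d+1) : ℕ) = p - d := by omega
    have h2 : ((p - (d+1) : ℕ) : ℝ) + 1 = ((p - d : ℕ) : ℝ) := by
      have : p - (d+1) + 1 = p - d := by omega
      rw [← this]; push_cast; ring
    have e1 : (p.choose (d+1) : ℝ) * (d+1) = (p.choose d : ℝ) * ((p - d : ℕ) : ℝ) := by
      exact_mod_cast Nat.choose_succ_right_eq p d
    have e2 : ((p+1).choose (d+1) : ℝ) * (d+1) = ((p:ℝ)+1) * (p.choose d : ℝ) := by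
      exact_mod_cast (Nat.add_one_mul_choose_eq p d).symm
    rw [h1, h2, mul_comm ((p.choose (d+1) : ℝ)) ((d:ℝ)+1)]
    rw [show ((d:ℝ)+1) * (p.choose (d+1) : ℝ) = (p.choose (d+1) : ℝ) * ((d:ℝ)+1) from mul_comm _ _]
    rw [e1, e2]
    have hm : (1:ℝ) ≤ ((p - d : ℕ) : ℝ) := by
      have : 1 ≤ p - d := by omega
      exact_mod_cast this
    have hmr : ((p - d : ℕ) : ℝ) = (p : ℝ) - d := by
      exact_mod_cast Nat.cast_sub h.le
    apply le_of_eq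
    rw [hmr]
    have hne1 : (p:ℝ) - d ≠ 0 := by linarith
    have hne2 : (p:ℝ) - d + 1 ≠ 0 := by linarith
    field_simp
    ring
  · subst h
    have hz : ((d+1) - (d+1) : ℕ) = 0 := by omega
    have hz2 : (d - d : ℕ) = 0 := by omega
    have hc : d.choose (d+1) = 0 := Nat.choose_eq_zero_of_lt (by omega)
    rw [hz, hz2, hc, Nat.choose_self, Nat.choose_self]
    push_cast
    rw [zero_mul, zero_div, add_zero]
    rw [one_mul, one_mul]
    apply div_le_div_of_nonneg_right ?_ ?_ |>.trans_eq rfl <;> try norm_num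
    all_goals simp_all
  · have hc1 : p.choose d = 0 := Nat.choose_eq_zero_of_lt h
    have hc2 : p.choose (d+1) = 0 := Nat.choose_eq_zero_of_lt (by omega)
    rw [hc1, hc2]
    push_cast
    rw [zero_mul, zero_div, zero_mul, zero_div, add_zero]
    positivity

lemma sum_bF_le (q : ℝ) : ∀ (p c : ℕ),
    (∑ v : Fin p → Bool, if cnt p v = c then bF p q v else 0)
      ≤ (p.choose c : ℝ) * c / (((p - c : ℕ) : ℝ) + 1) := by
  intro p
  induction p with
  | zero =>
    intro c
    have hz : ∀ v : Fin 0 → Bool, bF 0 q v = 0 := by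
      intro v
      unfold bF
      rw [dif_neg]
      rintro ⟨k, hk⟩
      unfold bFeas at hk
      simp at hk
    rw [Finset.sum_eq_zero fun v _ => by rw [hz v]; simp]
    positivity
  | succ p ih =>
    intro c
    rcases c with _ | d
    · rw [Finset.sum_eq_zero fun v _ => by
        split_ifs with h
        · exact bF_zero_of_cnt (p+1) q v h
        · rfl]
      positivity
    · by_cases hP : (1 + (((p+1) - (d+1) : ℕ) : ℝ)) / max (((d+1 : ℕ) : ℕ) : ℝ) 1 ≤ q
      · -- feasible at 0: every sequence with cnt = d+1 stops at 0
        have key : ∀ v : Fin (p+1) → Bool, cnt (p+1) v = d + 1 →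
            bF (p+1) q v = (((d+1 : ℕ) : ℕ) : ℝ) / (1 + ((((p+1) - (d+1) : ℕ)) : ℝ)) := by
          intro v hv
          rw [bF_of_zero_mem (p+1) q v]
          · rw [hv]
          · rw [zero_mem_bFeas]
            refine ⟨Nat.succ_pos p, ?_⟩
            rw [hv]
            exact hP
        have hfac : (∑ v : Fin (p+1) → Bool, if cnt (p+1) v = d + 1 then bF (p+1) q v else 0)
            = (∑ v : Fin (p+1) → Bool, if cnt (p+1) v = d + 1 then (1:ℝ) else 0)
              * ((((d+1 : ℕ) : ℕ) : ℝ) / (1 + ((((p+1) - (d+1) : ℕ)) : ℝ))) := by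
          rw [Finset.sum_mul]
          refine Finset.sum_congr rfl fun v _ => ?_
          split_ifs with h
          · rw [key v h, one_mul]
          · rw [zero_mul]
        rw [hfac, sum_cnt_indicator]
        apply le_of_eq
        rw [mul_div_assoc]
        ring_nf
      · -- not feasible at 0
        have hnm : ∀ v : Fin (p+1) → Bool, cnt (p+1) v = d + 1 →
            0 ∉ bFeas (p+1) q v := by
          intro v hv h0
          rw [zero_mem_bFeas] at h0
          exact hP (by rw [← hv]; exact_mod_cast h0.2)
        rw [sum_cons_split]
        have hA : (∑ w : Fin p → Bool,
              if cnt (p+1) (Fin.cons true w) = d + 1 then bF (p+1) q (Fin.cons true w) else 0)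
            = ∑ w : Fin p → Bool, if cnt p w = d then bF p q w else 0 := by
          refine Finset.sum_congr rfl fun w _ => ?_
          by_cases h : cnt p w = d
          · rw [if_pos (by rw [cnt_cons_true]; omega), if_pos h,
              bF_cons_not_zero p q true w (hnm _ (by rw [cnt_cons_true]; omega))]
          · rw [if_neg (by rw [cnt_cons_true]; omega), if_neg h]
        have hB : (∑ w : Fin p → Bool,
              if cnt (p+1) (Fin.cons false w) = d + 1 then bF (p+1) q (Fin.cons false w) else 0)
            = ∑ w : Fin p → Bool, if cnt p w = d + 1 then bF p q w else 0 := by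
          refine Finset.sum_congr rfl fun w _ => ?_
          by_cases h : cnt p w = d + 1
          · rw [if_pos (by rw [cnt_cons_false]; omega), if_pos h,
              bF_cons_not_zero p q false w (hnm _ (by rw [cnt_cons_false]; omega))]
          · rw [if_neg (by rw [cnt_cons_false]; omega), if_neg h]
        rw [hA, hB]
        refine le_trans (add_le_add (ih d) (ih (d+1))) ?_
        exact_mod_cast choose_arith p d

lemma total_bF_le (q : ℝ) (p : ℕ) :
    (∑ v : Fin p → Bool, bF p q v) ≤ (2:ℝ)^p := by
  have h1 : ∀ v : Fin p → Bool,
      bF p q v = ∑ c ∈ Finset.range (p+1), if cnt p v = c then bF p q v else 0 := by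
    intro v
    rw [Finset.sum_ite_eq (Finset.range (p+1)) (cnt p v) (fun _ => bF p q v),
      if_pos (Finset.mem_range.mpr (Nat.lt_succ_of_le (cnt_le p v)))]
  calc (∑ v : Fin p → Bool, bF p q v)
      = ∑ v : Fin p → Bool, ∑ c ∈ Finset.range (p+1),
          if cnt p v = c then bF p q v else 0 := Finset.sum_congr rfl fun v _ => h1 v
    _ = ∑ c ∈ Finset.range (p+1), ∑ v : Fin p → Bool,
          if cnt p v = c then bF p q v else 0 := Finset.sum_comm
    _ ≤ ∑ c ∈ Finset.range (p+1), (p.choose c : ℝ) * c / (((p - c : ℕ) : ℝ) + 1) :=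
        Finset.sum_le_sum fun c _ => sum_bF_le q p c
    _ ≤ (2:ℝ)^p := by
        rw [Finset.sum_range_succ']
        push_cast
        have hterm : ∀ d ∈ Finset.range p,
            (p.choose (d+1) : ℝ) * ((d:ℕ)+1) / (((p - (d+1) : ℕ) : ℝ) + 1) = (p.choose d : ℝ) := by
          intro d hd
          have hd' : d < p := Finset.mem_range.mp hd
          have h2 : ((p - (d+1) : ℕ) : ℝ) + 1 = ((p - d : ℕ) : ℝ) := by
            have : p - (d+1) + 1 = p - d := by omega
            rw [← this]; push_cast; ring
          have e1 : (p.choose (d+1) : ℝ) * ((d:ℝ)+1) = (p.choose d : ℝ) * ((p - d : ℕ) : ℝ) := by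
            exact_mod_cast Nat.choose_succ_right_eq p d
          have hne : ((p - d : ℕ) : ℝ) ≠ 0 := by
            have : 0 < p - d := by omega
            positivity
          rw [h2, e1, mul_div_assoc, div_self hne, mul_one]
        rw [Finset.sum_congr rfl hterm]
        rw [mul_zero, zero_div, add_zero]
        have hnat : (∑ d ∈ Finset.range p, (p.choose d : ℝ))
            = ((∑ d ∈ Finset.range p, p.choose d : ℕ) : ℝ) := by push_cast; rfl
        rw [hnat]
        have hle : (∑ d ∈ Finset.range p, p.choose d) ≤ 2^p := by
          have h := Nat.sum_range_choose p
          have : (∑ d ∈ Finset.range (p+1), p.choose d)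
              = (∑ d ∈ Finset.range p, p.choose d) + p.choose p := Finset.sum_range_succ _ _
          omega
        exact_mod_cast hle



noncomputable def bSign {p : ℕ} (v : Fin p → Bool) : Fin p → ℝ := fun j => if v j = true then 1 else -1











lemma bSign_eq_one_iff {p : ℕ} (v : Fin p → Bool) (j : Fin p) : bSign v j = 1 ↔ v j = true := by
  cases h : v j <;> simp [bSign, h] <;> norm_num

lemma bSign_eq_neg_one_iff {p : ℕ} (v : Fin p → Bool) (j : Fin p) : bSign v j = -1 ↔ v j = false := by
  cases h : v j <;> simp [bSign, h] <;> norm_num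

lemma card_plus (p : ℕ) (v : Fin p → Bool) (k : ℕ) :
    ((univ.filter fun j : Fin p => k ≤ (j : ℕ) ∧ bSign v j = 1).card) = bPlus p v k := by
  rw [Finset.card_filter]
  exact Finset.sum_congr rfl fun j _ =>
    if_congr (and_congr Iff.rfl (bSign_eq_one_iff v j)) rfl rfl

lemma card_minus (p : ℕ) (v : Fin p → Bool) (k : ℕ) :
    ((univ.filter fun j : Fin p => k ≤ (j : ℕ) ∧ bSign v j = -1).card) = bMinus p v k := by
  rw [Finset.card_filter]
  exact Finset.sum_congr rfl fun j _ =>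
    if_congr (and_congr Iff.rfl (bSign_eq_neg_one_iff v j)) rfl rfl

lemma feas_eq (p : ℕ) (q : ℝ) (v : Fin p → Bool) :
    signFeasible p q (bSign v) = bFeas p q v := by
  unfold signFeasible bFeas
  apply Finset.filter_congr
  intro k _
  rw [card_plus, card_minus]


lemma reject_empty (p : ℕ) (q : ℝ) (v : Fin p → Bool) (h : ¬ (bFeas p q v).Nonempty) :
    signReject p q (bSign v) = ∅ := by
  unfold signReject
  simp only [feas_eq]
  rw [dif_neg h]

lemma card_reject (p : ℕ) (q : ℝ) (v : Fin p → Bool) (h : (bFeas p q v).Nonempty) :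
    (signReject p q (bSign v)).card = bPlus p v ((bFeas p q v).min' h) := by
  unfold signReject
  simp only [feas_eq]
  rw [dif_pos h, Finset.card_filter]
  exact Finset.sum_congr rfl fun j _ =>
    if_congr (and_congr Iff.rfl (bSign_eq_one_iff v j)) rfl rfl

lemma FDP_le_bF (p : ℕ) (q : ℝ) (v : Fin p → Bool) :
    ((signReject p q (bSign v)).card : ℝ) / max ((signReject p q (bSign v)).card : ℝ) 1
      ≤ q * bF p q v := by
  by_cases h : (bFeas p q v).Nonempty
  · have hcard := card_reject p q v h
    have hmem := Finset.min'_mem _ h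
    have hfeas : (1 + (bMinus p v ((bFeas p q v).min' h) : ℝ))
        / max (bPlus p v ((bFeas p q v).min' h) : ℝ) 1 ≤ q := by
      have h2 := hmem
      unfold bFeas at h2
      rw [Finset.mem_filter] at h2
      exact h2.2
    have hbF : bF p q v = (bPlus p v ((bFeas p q v).min' h) : ℝ)
        / (1 + (bMinus p v ((bFeas p q v).min' h) : ℝ)) := by
      unfold bF; rw [dif_pos h]
    rw [hcard, hbF]
    set S : ℕ := bPlus p v ((bFeas p q v).min' h) with hS
    set V : ℕ := bMinus p v ((bFeas p q v).min' h) with hV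
    rcases Nat.eq_zero_or_pos S with h0 | h0
    · rw [h0]
      simp
    · have hS1 : (1:ℝ) ≤ (S : ℝ) := by exact_mod_cast h0
      have hmax : max (S : ℝ) 1 = (S : ℝ) := max_eq_left hS1
      rw [hmax] at hfeas ⊢
      rw [div_self (by linarith)]
      have hVpos : (0:ℝ) < 1 + (V : ℝ) := by positivity
      rw [div_le_iff₀ (by linarith : (0:ℝ) < (S:ℝ))] at hfeas
      rw [← mul_div_assoc, le_div_iff₀ hVpos, one_mul]
      linarith
  · rw [reject_empty p q v h]
    have hbF : bF p q v = 0 := by unfold bF; rw [dif_neg h]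
    rw [hbF]
    simp


/-- if `σ_1,…,σ_p` are i.i.d. uniform on `{-1,+1}` (all hypotheses null),
then the knockoff filter stopping rule at level `q ∈ (0,1)` satisfies
`E[#R / max(#R,1)] ≤ q`, where `R = {j ≥ T : σ_j = +1}` is the rejection set. -/
theorem knockoff_filter_global_null_fdr {Ω : Type*} [MeasurableSpace Ω]
    (μ : Measure Ω) [IsProbabilityMeasure μ] (p : ℕ) (q : ℝ) (hq0 : 0 < q) (hq1 : q < 1)
    (σ : Fin p → Ω → ℝ) (hmeas : ∀ j, Measurable (σ j))
    (hval : ∀ j ω, σ j ω = 1 ∨ σ j ω = -1)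
    (hfair : ∀ j, μ {ω | σ j ω = 1} = 1/2)
    (hindep : iIndepFun σ μ) :
    ∫ ω, ((signReject p q fun j => σ j ω).card : ℝ) /
        max ((signReject p q fun j => σ j ω).card : ℝ) 1 ∂μ ≤ q := by
  set g : (Fin p → Bool) → ℝ := fun v =>
    ((signReject p q (bSign v)).card : ℝ) / max ((signReject p q (bSign v)).card : ℝ) 1 with hg
  set vOf : Ω → (Fin p → Bool) := fun ω j => if σ j ω = 1 then true else false with hvOf
  have hsign : ∀ ω, (fun j => σ j ω) = bSign (vOf ω) := by
    intro ω
    funext j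
    rcases hval j ω with h | h
    · have hv : vOf ω j = true := by simp [hvOf, h]
      rw [h]
      simp [bSign, hv]
    · have hv : vOf ω j = false := by
        simp only [hvOf]
        rw [if_neg (by rw [h]; norm_num)]
      rw [h]
      simp [bSign, hv]
  have hinteq : (fun ω => ((signReject p q fun j => σ j ω).card : ℝ) /
      max ((signReject p q fun j => σ j ω).card : ℝ) 1) = fun ω => g (vOf ω) := by
    funext ω
    rw [hg]
    simp only
    rw [hsign ω]
  rw [hinteq]
  -- the partition sets
  set A : (Fin p → Bool) → Set Ω := fun v => ⋂ j, σ j ⁻¹' {bSign v j} with hA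
  have hAmeas : ∀ v, MeasurableSet (A v) := fun v =>
    MeasurableSet.iInter fun j => hmeas j (measurableSet_singleton _)
  have hAiff : ∀ ω v, ω ∈ A v ↔ vOf ω = v := by
    intro ω v
    simp only [hA, Set.mem_iInter, Set.mem_preimage, Set.mem_singleton_iff]
    constructor
    · intro hj
      funext j
      have h1 : σ j ω = bSign (vOf ω) j := congrFun (hsign ω) j
      have h2 : bSign (vOf ω) j = bSign v j := by rw [← h1, hj j]
      cases hb : v j
      · have hv2 : bSign (vOf ω) j = -1 := by rw [h2]; simp [bSign, hb]
        rw [(bSign_eq_neg_one_iff (vOf ω) j).1 hv2]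
      · have hv2 : bSign (vOf ω) j = 1 := by rw [h2]; simp [bSign, hb]
        rw [(bSign_eq_one_iff (vOf ω) j).1 hv2]
    · rintro rfl j
      exact congrFun (hsign ω) j
  have hsplit : (fun ω => g (vOf ω))
      = fun ω => ∑ v : Fin p → Bool, (A v).indicator (fun _ => g v) ω := by
    funext ω
    have : ∀ v : Fin p → Bool, (A v).indicator (fun _ => g v) ω
        = if vOf ω = v then g v else 0 := by
      intro v
      rw [Set.indicator_apply]
      exact if_congr (hAiff ω v) rfl rfl
    rw [Finset.sum_congr rfl fun v _ => this v]
    rw [Finset.sum_ite_eq Finset.univ (vOf ω) (fun v => g v), if_pos (Finset.mem_univ _)]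
  rw [hsplit]
  have hhalf : ∀ (v : Fin p → Bool) (j : Fin p), μ (σ j ⁻¹' {bSign v j}) = 1/2 := by
    intro v j
    have hset1 : σ j ⁻¹' {(1:ℝ)} = {ω | σ j ω = 1} := by ext ω; simp
    cases hb : v j
    · have hbv : bSign v j = -1 := by simp [bSign, hb]
      rw [hbv]
      have hset : σ j ⁻¹' {(-1:ℝ)} = {ω | σ j ω = 1}ᶜ := by
        ext ω
        simp only [Set.mem_preimage, Set.mem_singleton_iff, Set.mem_compl_iff, Set.mem_setOf_eq]
        constructor
        · intro h h1
          rw [h1] at h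
          norm_num at h
        · intro h
          rcases hval j ω with h1 | h1
          · exact absurd h1 h
          · exact h1
      rw [hset]
      have hms : MeasurableSet {ω | σ j ω = 1} := by
        rw [← hset1]
        exact hmeas j (measurableSet_singleton _)
      rw [measure_compl hms (measure_ne_top μ _), hfair j, measure_univ]
      rw [one_div, ENNReal.one_sub_inv_two]
    · have hbv : bSign v j = 1 := by simp [bSign, hb]
      rw [hbv, hset1]
      exact hfair j
  have hmuA : ∀ v : Fin p → Bool, μ (A v) = (1/2 : ENNReal)^p := by
    intro v
    rw [hA]
    simp only
    rw [hindep.meas_iInter fun j => ⟨{bSign v j}, measurableSet_singleton _, rfl⟩]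
    rw [Finset.prod_congr rfl fun j _ => hhalf v j, Finset.prod_const, Finset.card_univ,
      Fintype.card_fin]
  have hint : ∫ ω, (∑ v : Fin p → Bool, (A v).indicator (fun _ => g v) ω) ∂μ
      = ∑ v : Fin p → Bool, ((1/2:ℝ)^p) * g v := by
    rw [integral_finset_sum _ fun v _ => (integrable_const (g v)).indicator (hAmeas v)]
    refine Finset.sum_congr rfl fun v _ => ?_
    rw [integral_indicator_const (g v) (hAmeas v), measureReal_def, hmuA v, smul_eq_mul]
    congr 1
    rw [ENNReal.toReal_pow]
    norm_num
  rw [hint]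
  have hbound : ∀ v : Fin p → Bool, ((1/2:ℝ)^p) * g v ≤ ((1/2:ℝ)^p) * (q * bF p q v) := by
    intro v
    exact mul_le_mul_of_nonneg_left (FDP_le_bF p q v) (by positivity)
  calc (∑ v : Fin p → Bool, ((1/2:ℝ)^p) * g v)
      ≤ ∑ v : Fin p → Bool, ((1/2:ℝ)^p) * (q * bF p q v) := Finset.sum_le_sum fun v _ => hbound v
    _ = ((1/2:ℝ)^p) * q * ∑ v : Fin p → Bool, bF p q v := by
        rw [← Finset.mul_sum]
        rw [← Finset.mul_sum, mul_assoc]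
    _ ≤ ((1/2:ℝ)^p) * q * (2:ℝ)^p := by
        apply mul_le_mul_of_nonneg_left (total_bF_le q p) (by positivity)
    _ = q := by
        rw [mul_comm ((1/2:ℝ)^p) q, mul_assoc, ← mul_pow]
        norm_num
end

section
/- Let σ_1,...,σ_p ∈ {-1,+1} with the property that conditional on (σ_j)_{j ∉ N} the signs (σ_j)_{j ∈ N} are i.i.d. uniform on {-1,+1}, where N ⊆ {1,...,p} is the set of null indices. For q ∈ (0,1) define T = min{ t : (1 + #{j ≥ t : σ_j = -1})/max(#{j ≥ t : σ_j = +1},1) ≤ q } and rejection set R = {j ≥ T : σ_j = +1}. Then E[ #(R ∩ N)/max(#R,1) ] ≤ q. -/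
open MeasureTheory ProbabilityTheory Finset
open scoped Classical ENNReal

namespace KF

variable {p : ℕ}

noncomputable def posC (k : ℕ) (s : Fin p → ℝ) : ℕ :=
  (univ.filter fun j : Fin p => k ≤ (j : ℕ) ∧ s j = 1).card

noncomputable def negC (k : ℕ) (s : Fin p → ℝ) : ℕ :=
  (univ.filter fun j : Fin p => k ≤ (j : ℕ) ∧ s j = -1).card

noncomputable def nullP (N : Finset (Fin p)) (k : ℕ) (s : Fin p → ℝ) : ℕ :=
  (N.filter fun j : Fin p => k ≤ (j : ℕ) ∧ s j = 1).card

noncomputable def nullN (N : Finset (Fin p)) (k : ℕ) (s : Fin p → ℝ) : ℕ :=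
  (N.filter fun j : Fin p => k ≤ (j : ℕ) ∧ s j = -1).card

noncomputable def Mval (N : Finset (Fin p)) (k : ℕ) (s : Fin p → ℝ) : ℝ :=
  (nullP N k s : ℝ) / (1 + (nullN N k s : ℝ))

noncomputable def stopVal (q : ℝ) (N : Finset (Fin p)) (s : Fin p → ℝ) : ℝ :=
  if h : (signFeasible p q s).Nonempty then Mval N ((signFeasible p q s).min' h) s else 0

noncomputable def ovr (N : Finset (Fin p)) (s : Fin p → ℝ) (c : ℕ) (P : Finset (Fin p)) :
    Fin p → ℝ :=
  fun j => if j ∈ N ∧ c ≤ (j : ℕ) then (if j ∈ P then 1 else -1) else s j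

lemma mem_signFeasible {q : ℝ} {s : Fin p → ℝ} {k : ℕ} :
    k ∈ signFeasible p q s ↔ k < p ∧ (1 + (negC k s : ℝ)) / max (posC k s : ℝ) 1 ≤ q := by
  simp [signFeasible, posC, negC, Finset.mem_filter, Finset.mem_range]

lemma hs_ovr {N : Finset (Fin p)} {s : Fin p → ℝ} (hs : ∀ j, s j = 1 ∨ s j = -1)
    (c : ℕ) (P : Finset (Fin p)) : ∀ j, ovr N s c P j = 1 ∨ ovr N s c P j = -1 := by
  intro j; unfold ovr; split_ifs <;> simp [hs j]

lemma ovr_congr {N : Finset (Fin p)} {s s' : Fin p → ℝ} {c : ℕ} {P : Finset (Fin p)}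
    (h : ∀ j, ¬(j ∈ N ∧ c ≤ (j : ℕ)) → s j = s' j) : ovr N s c P = ovr N s' c P := by
  funext j; unfold ovr; split_ifs with hj <;> first | rfl | exact h j hj


lemma ovr_ovr {N : Finset (Fin p)} {s : Fin p → ℝ} {c : ℕ} {Q P : Finset (Fin p)} :
    ovr N (ovr N s c Q) c P = ovr N s c P := by
  refine ovr_congr fun j hj => ?_
  unfold ovr; simp [hj]

/-- Master counting lemma for the override. -/
lemma count_ovr {N : Finset (Fin p)} {s : Fin p → ℝ} {c k : ℕ} {P : Finset (Fin p)}
    (S : Finset (Fin p)) (hNS : N ⊆ S) (hk : k ≤ c)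
    (hP : P ⊆ N.filter fun j : Fin p => c ≤ (j : ℕ)) :
    (S.filter fun j : Fin p => k ≤ (j : ℕ) ∧ ovr N s c P j = 1).card
      = (S.filter fun j : Fin p => k ≤ (j : ℕ) ∧ ¬(j ∈ N ∧ c ≤ (j : ℕ)) ∧ s j = 1).card + P.card := by
  have hPN : ∀ j ∈ P, j ∈ N ∧ c ≤ (j : ℕ) := by
    intro j hj; have := hP hj; simpa using this
  rw [← Finset.card_union_of_disjoint (by
    rw [Finset.disjoint_left]
    intro j hj hjP
    have h1 := (Finset.mem_filter.mp hj).2.2.1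
    exact h1 (hPN j hjP))]
  congr 1
  ext j
  simp only [Finset.mem_filter, Finset.mem_union]; simp only [ovr]
  by_cases hj : j ∈ N ∧ c ≤ (j : ℕ)
  · rw [if_pos hj]
    by_cases hjP : j ∈ P
    · rw [if_pos hjP]
      constructor
      · intro _; right; exact hjP
      · intro _; exact ⟨hNS hj.1, le_trans hk hj.2, rfl⟩
    · rw [if_neg hjP]
      constructor
      · rintro ⟨-, -, h⟩; norm_num at h
      · rintro (⟨-, -, h, -⟩ | h)
        · exact absurd hj h
        · exact absurd h hjP
  · rw [if_neg hj]
    have hjP : j ∉ P := fun h => hj (hPN j h)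
    constructor
    · rintro ⟨h1, h2, h3⟩
      left; exact ⟨h1, h2, hj, h3⟩
    · rintro (⟨h1, h2, -, h3⟩ | h)
      · exact ⟨h1, h2, h3⟩
      · exact absurd h hjP

/-- Master counting lemma for a base sign vector. -/
lemma count_base {N : Finset (Fin p)} {s : Fin p → ℝ} {c k : ℕ} {v : ℝ}
    (S : Finset (Fin p)) (hNS : N ⊆ S) (hk : k ≤ c) :
    (S.filter fun j : Fin p => k ≤ (j : ℕ) ∧ s j = v).card
      = (S.filter fun j : Fin p => k ≤ (j : ℕ) ∧ ¬(j ∈ N ∧ c ≤ (j : ℕ)) ∧ s j = v).card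
        + (N.filter fun j : Fin p => c ≤ (j : ℕ) ∧ s j = v).card := by
  rw [← Finset.card_union_of_disjoint (by
    rw [Finset.disjoint_left]
    intro j hj hj2
    have h1 := (Finset.mem_filter.mp hj).2.2.1
    have h2 := Finset.mem_filter.mp hj2
    exact h1 ⟨h2.1, h2.2.1⟩)]
  congr 1
  ext j
  simp only [Finset.mem_filter, Finset.mem_union]
  constructor
  · rintro ⟨hjS, hkj, hj1⟩
    by_cases hj : j ∈ N ∧ c ≤ (j : ℕ)
    · right; exact ⟨hj.1, hj.2, hj1⟩
    · left; exact ⟨hjS, hkj, hj, hj1⟩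
  · rintro (⟨hjS, hkj, -, hj1⟩ | ⟨hjN, hcj, hj1⟩)
    · exact ⟨hjS, hkj, hj1⟩
    · exact ⟨hNS hjN, le_trans hk hcj, hj1⟩

/-- Master counting lemma for the override, value `-1`. -/
lemma count_ovr_neg {N : Finset (Fin p)} {s : Fin p → ℝ} {c k : ℕ} {P : Finset (Fin p)}
    (S : Finset (Fin p)) (hNS : N ⊆ S) (hk : k ≤ c)
    (hP : P ⊆ N.filter fun j : Fin p => c ≤ (j : ℕ)) :
    (S.filter fun j : Fin p => k ≤ (j : ℕ) ∧ ovr N s c P j = -1).card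
      = (S.filter fun j : Fin p => k ≤ (j : ℕ) ∧ ¬(j ∈ N ∧ c ≤ (j : ℕ)) ∧ s j = -1).card
        + ((N.filter fun j : Fin p => c ≤ (j : ℕ)) \ P).card := by
  have hPN : ∀ j ∈ P, j ∈ N ∧ c ≤ (j : ℕ) := by
    intro j hj; have := hP hj; simpa using this
  rw [← Finset.card_union_of_disjoint (by
    rw [Finset.disjoint_left]
    intro j hj hjP
    have h1 := (Finset.mem_filter.mp hj).2.2.1
    have h2 := Finset.mem_sdiff.mp hjP
    have := Finset.mem_filter.mp h2.1
    exact h1 ⟨this.1, this.2⟩)]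
  congr 1
  ext j
  simp only [Finset.mem_filter, Finset.mem_union, Finset.mem_sdiff]; simp only [ovr]
  by_cases hj : j ∈ N ∧ c ≤ (j : ℕ)
  · rw [if_pos hj]
    by_cases hjP : j ∈ P
    · rw [if_pos hjP]
      constructor
      · rintro ⟨-, -, h⟩; norm_num at h
      · rintro (⟨-, -, h, -⟩ | ⟨-, h⟩)
        · exact absurd hj h
        · exact absurd hjP h
    · rw [if_neg hjP]
      constructor
      · intro _
        exact Or.inr ⟨⟨hj.1, hj.2⟩, hjP⟩
      · intro _
        exact ⟨hNS hj.1, le_trans hk hj.2, rfl⟩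
  · rw [if_neg hj]
    constructor
    · rintro ⟨h1, h2, h3⟩
      left; exact ⟨h1, h2, hj, h3⟩
    · rintro (⟨h1, h2, -, h3⟩ | ⟨h1, -⟩)
      · exact ⟨h1, h2, h3⟩
      · exact absurd h1 hj

lemma nullP_add_nullN {N : Finset (Fin p)} {s : Fin p → ℝ} {c : ℕ}
    (hs : ∀ j, s j = 1 ∨ s j = -1) :
    nullP N c s + nullN N c s = (N.filter fun j : Fin p => c ≤ (j : ℕ)).card := by
  unfold nullP nullN
  rw [← Finset.card_union_of_disjoint (by
    rw [Finset.disjoint_left]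
    intro j hj hj2
    have h1 := (Finset.mem_filter.mp hj).2.2
    have h2 := (Finset.mem_filter.mp hj2).2.2
    rw [h1] at h2; norm_num at h2)]
  congr 1
  ext j
  simp only [Finset.mem_filter, Finset.mem_union]
  constructor
  · rintro (⟨h1, h2, -⟩ | ⟨h1, h2, -⟩) <;> exact ⟨h1, h2⟩
  · rintro ⟨h1, h2⟩
    rcases hs j with h | h
    · left; exact ⟨h1, h2, h⟩
    · right; exact ⟨h1, h2, h⟩

lemma card_P_le {N : Finset (Fin p)} {c : ℕ} {P : Finset (Fin p)}
    (hP : P ⊆ N.filter fun j : Fin p => c ≤ (j : ℕ)) :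
    P.card ≤ (N.filter fun j : Fin p => c ≤ (j : ℕ)).card := Finset.card_le_card hP

lemma posC_ovr {N : Finset (Fin p)} {s : Fin p → ℝ} {c k : ℕ} {P : Finset (Fin p)}
    (hk : k ≤ c) (hP : P ⊆ N.filter fun j : Fin p => c ≤ (j : ℕ))
    (hcard : P.card = nullP N c s) :
    posC k (ovr N s c P) = posC k s := by
  unfold posC
  rw [count_ovr Finset.univ (Finset.subset_univ N) hk hP,
    count_base (N := N) (c := c) Finset.univ (Finset.subset_univ N) hk, hcard]
  rfl

lemma negC_ovr {N : Finset (Fin p)} {s : Fin p → ℝ} {c k : ℕ} {P : Finset (Fin p)}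
    (hs : ∀ j, s j = 1 ∨ s j = -1)
    (hk : k ≤ c) (hP : P ⊆ N.filter fun j : Fin p => c ≤ (j : ℕ))
    (hcard : P.card = nullP N c s) :
    negC k (ovr N s c P) = negC k s := by
  unfold negC
  rw [count_ovr_neg Finset.univ (Finset.subset_univ N) hk hP,
    count_base (N := N) (c := c) Finset.univ (Finset.subset_univ N) hk,
    Finset.card_sdiff_of_subset hP]
  have h1 := nullP_add_nullN (N := N) (c := c) hs
  have h2 := card_P_le hP
  have h3 : (N.filter fun j : Fin p => c ≤ (j : ℕ) ∧ s j = -1).card = nullN N c s := rfl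
  omega

lemma nullP_ovr {N : Finset (Fin p)} {s : Fin p → ℝ} {c k : ℕ} {P : Finset (Fin p)}
    (hk : k ≤ c) (hP : P ⊆ N.filter fun j : Fin p => c ≤ (j : ℕ))
    (hcard : P.card = nullP N c s) :
    nullP N k (ovr N s c P) = nullP N k s := by
  unfold nullP
  rw [count_ovr N (le_refl N) hk hP, count_base (N := N) (c := c) N (le_refl N) hk, hcard]
  rfl

lemma nullN_ovr {N : Finset (Fin p)} {s : Fin p → ℝ} {c k : ℕ} {P : Finset (Fin p)}
    (hs : ∀ j, s j = 1 ∨ s j = -1)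
    (hk : k ≤ c) (hP : P ⊆ N.filter fun j : Fin p => c ≤ (j : ℕ))
    (hcard : P.card = nullP N c s) :
    nullN N k (ovr N s c P) = nullN N k s := by
  unfold nullN
  rw [count_ovr_neg N (le_refl N) hk hP, count_base (N := N) (c := c) N (le_refl N) hk,
    Finset.card_sdiff_of_subset hP]
  have h1 := nullP_add_nullN (N := N) (c := c) hs
  have h2 := card_P_le hP
  have h3 : (N.filter fun j : Fin p => c ≤ (j : ℕ) ∧ s j = -1).card = nullN N c s := rfl
  omega

lemma nullP_ovr_self {N : Finset (Fin p)} {s : Fin p → ℝ} {c : ℕ} {P : Finset (Fin p)}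
    (hP : P ⊆ N.filter fun j : Fin p => c ≤ (j : ℕ)) :
    nullP N c (ovr N s c P) = P.card := by
  unfold nullP
  rw [count_ovr N (le_refl N) (le_refl c) hP]
  have : (N.filter fun j : Fin p => c ≤ (j : ℕ) ∧ ¬(j ∈ N ∧ c ≤ (j : ℕ)) ∧ s j = 1) = ∅ := by
    rw [Finset.filter_eq_empty_iff]
    rintro j hj ⟨h1, h2, -⟩
    exact h2 ⟨hj, h1⟩
  rw [this]
  simp

lemma nullN_ovr_self {N : Finset (Fin p)} {s : Fin p → ℝ} {c : ℕ} {P : Finset (Fin p)}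
    (hP : P ⊆ N.filter fun j : Fin p => c ≤ (j : ℕ)) :
    nullN N c (ovr N s c P) = (N.filter fun j : Fin p => c ≤ (j : ℕ)).card - P.card := by
  unfold nullN
  rw [count_ovr_neg N (le_refl N) (le_refl c) hP, Finset.card_sdiff_of_subset hP]
  have : (N.filter fun j : Fin p => c ≤ (j : ℕ) ∧ ¬(j ∈ N ∧ c ≤ (j : ℕ)) ∧ s j = -1) = ∅ := by
    rw [Finset.filter_eq_empty_iff]
    rintro j hj ⟨h1, h2, -⟩
    exact h2 ⟨hj, h1⟩
  rw [this]
  simp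

lemma mem_signFeasible_ovr {q : ℝ} {N : Finset (Fin p)} {s : Fin p → ℝ} {c k : ℕ}
    {P : Finset (Fin p)} (hs : ∀ j, s j = 1 ∨ s j = -1)
    (hk : k ≤ c) (hP : P ⊆ N.filter fun j : Fin p => c ≤ (j : ℕ))
    (hcard : P.card = nullP N c s) :
    k ∈ signFeasible p q (ovr N s c P) ↔ k ∈ signFeasible p q s := by
  rw [mem_signFeasible, mem_signFeasible, posC_ovr hk hP hcard, negC_ovr hs hk hP hcard]

lemma stopVal_ovr_of_lt {q : ℝ} {N : Finset (Fin p)} {s : Fin p → ℝ} {c : ℕ}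
    {P : Finset (Fin p)} (hs : ∀ j, s j = 1 ∨ s j = -1)
    (hP : P ⊆ N.filter fun j : Fin p => c ≤ (j : ℕ)) (hcard : P.card = nullP N c s)
    (h1 : ((signFeasible p q s).filter (· < c)).Nonempty) :
    stopVal q N (ovr N s c P) = stopVal q N s := by
  obtain ⟨k, hk⟩ := h1
  rw [Finset.mem_filter] at hk
  have hne : (signFeasible p q s).Nonempty := ⟨k, hk.1⟩
  set k₀ := (signFeasible p q s).min' hne with hk₀
  have hk₀c : k₀ < c := lt_of_le_of_lt (Finset.min'_le _ k hk.1) hk.2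
  have hk₀mem : k₀ ∈ signFeasible p q (ovr N s c P) :=
    (mem_signFeasible_ovr hs (le_of_lt hk₀c) hP hcard).mpr (Finset.min'_mem _ hne)
  have hne' : (signFeasible p q (ovr N s c P)).Nonempty := ⟨k₀, hk₀mem⟩
  set k₁ := (signFeasible p q (ovr N s c P)).min' hne' with hk₁
  have hk₁le : k₁ ≤ k₀ := Finset.min'_le _ k₀ hk₀mem
  have hk₁mem : k₁ ∈ signFeasible p q s :=
    (mem_signFeasible_ovr hs (le_trans hk₁le (le_of_lt hk₀c)) hP hcard).mp
      (Finset.min'_mem _ hne')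
  have hk₀le : k₀ ≤ k₁ := Finset.min'_le _ k₁ hk₁mem
  have heq : k₁ = k₀ := le_antisymm hk₁le hk₀le
  unfold stopVal
  rw [dif_pos hne', dif_pos hne, ← hk₁, ← hk₀, heq]
  unfold Mval
  rw [nullP_ovr (le_of_lt hk₀c) hP hcard, nullN_ovr hs (le_of_lt hk₀c) hP hcard]

lemma stopVal_ovr_of_eq {q : ℝ} {N : Finset (Fin p)} {s : Fin p → ℝ} {c : ℕ}
    {P : Finset (Fin p)} (hs : ∀ j, s j = 1 ∨ s j = -1)
    (hP : P ⊆ N.filter fun j : Fin p => c ≤ (j : ℕ)) (hcard : P.card = nullP N c s)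
    (h1 : ¬ ((signFeasible p q s).filter (· < c)).Nonempty)
    (h2 : c ∈ signFeasible p q s) :
    stopVal q N (ovr N s c P) = Mval N c s := by
  have hcmem : c ∈ signFeasible p q (ovr N s c P) :=
    (mem_signFeasible_ovr hs (le_refl c) hP hcard).mpr h2
  have hne' : (signFeasible p q (ovr N s c P)).Nonempty := ⟨c, hcmem⟩
  set k₁ := (signFeasible p q (ovr N s c P)).min' hne' with hk₁
  have hk₁le : k₁ ≤ c := Finset.min'_le _ c hcmem
  have hk₁mem : k₁ ∈ signFeasible p q s :=
    (mem_signFeasible_ovr hs hk₁le hP hcard).mp (Finset.min'_mem _ hne')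
  have heq : k₁ = c := by
    rcases lt_or_eq_of_le hk₁le with h | h
    · exact absurd ⟨k₁, Finset.mem_filter.mpr ⟨hk₁mem, h⟩⟩ h1
    · exact h
  unfold stopVal
  rw [dif_pos hne', ← hk₁, heq]
  unfold Mval
  rw [nullP_ovr (le_refl c) hP hcard, nullN_ovr hs (le_refl c) hP hcard]

lemma stopVal_ovr_of_empty {q : ℝ} {N : Finset (Fin p)} {s : Fin p → ℝ} {c : ℕ}
    (hs : ∀ j, s j = 1 ∨ s j = -1) (hcard : nullP N c s = 0)
    (h1 : ¬ ((signFeasible p q s).filter (· < c)).Nonempty)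
    (h2 : c ∉ signFeasible p q s) :
    stopVal q N (ovr N s c ∅) = 0 := by
  have hP : (∅ : Finset (Fin p)) ⊆ N.filter fun j : Fin p => c ≤ (j : ℕ) :=
    Finset.empty_subset _
  have hcard' : (∅ : Finset (Fin p)).card = nullP N c s := by simp [hcard]
  unfold stopVal
  split_ifs with hne'
  · set k₁ := (signFeasible p q (ovr N s c ∅)).min' hne' with hk₁
    have hk₁c : c < k₁ := by
      by_contra h
      push_neg at h
      have : k₁ ∈ signFeasible p q s :=
        (mem_signFeasible_ovr hs h hP hcard').mp (Finset.min'_mem _ hne')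
      rcases lt_or_eq_of_le h with h' | h'
      · exact h1 ⟨k₁, Finset.mem_filter.mpr ⟨this, h'⟩⟩
      · rw [h'] at this; exact h2 this
    have : nullP N k₁ (ovr N s c ∅) = 0 := by
      unfold nullP
      rw [Finset.card_eq_zero, Finset.filter_eq_empty_iff]
      rintro j hj ⟨hkj, hjv⟩
      have hcj : c ≤ (j : ℕ) := le_trans (le_of_lt hk₁c) hkj
      unfold ovr at hjv
      rw [if_pos ⟨hj, hcj⟩] at hjv
      simp only [Finset.notMem_empty, if_false] at hjv
      norm_num at hjv
    unfold Mval
    rw [this]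
    simp
  · rfl

lemma ovr_insert {N : Finset (Fin p)} {s : Fin p → ℝ} {c : ℕ} {hc : c < p}
    (hcN : (⟨c, hc⟩ : Fin p) ∈ N) {P' : Finset (Fin p)}
    (hP' : P' ⊆ N.filter fun j : Fin p => c + 1 ≤ (j : ℕ)) :
    ovr N s c (insert ⟨c, hc⟩ P')
      = ovr N (Function.update s ⟨c, hc⟩ 1) (c + 1) P' := by
  funext j
  unfold ovr
  by_cases hj : j = (⟨c, hc⟩ : Fin p)
  · subst hj
    rw [if_pos ⟨hcN, le_refl c⟩, if_pos (Finset.mem_insert_self _ _),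
      if_neg (by simp), Function.update_self]
  · have hjc : (j : ℕ) ≠ c := fun h => hj (Fin.ext h)
    have hmem : (j ∈ insert (⟨c, hc⟩ : Fin p) P') ↔ j ∈ P' := by
      simp [Finset.mem_insert, hj]
    by_cases hjN : j ∈ N ∧ c ≤ (j : ℕ)
    · have hjN' : j ∈ N ∧ c + 1 ≤ (j : ℕ) := ⟨hjN.1, by omega⟩
      rw [if_pos hjN, if_pos hjN']
      simp [hmem]
    · have hjN' : ¬(j ∈ N ∧ c + 1 ≤ (j : ℕ)) := fun h => hjN ⟨h.1, by omega⟩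
      rw [if_neg hjN, if_neg hjN', Function.update_of_ne hj]

lemma ovr_nomem {N : Finset (Fin p)} {s : Fin p → ℝ} {c : ℕ} {hc : c < p}
    (hcN : (⟨c, hc⟩ : Fin p) ∈ N) {P' : Finset (Fin p)}
    (hcP : (⟨c, hc⟩ : Fin p) ∉ P') :
    ovr N s c P' = ovr N (Function.update s ⟨c, hc⟩ (-1)) (c + 1) P' := by
  funext j
  unfold ovr
  by_cases hj : j = (⟨c, hc⟩ : Fin p)
  · subst hj
    rw [if_pos ⟨hcN, le_refl c⟩, if_neg hcP, if_neg (by simp), Function.update_self]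
  · have hjc : (j : ℕ) ≠ c := fun h => hj (Fin.ext h)
    by_cases hjN : j ∈ N ∧ c ≤ (j : ℕ)
    · have hjN' : j ∈ N ∧ c + 1 ≤ (j : ℕ) := ⟨hjN.1, by omega⟩
      rw [if_pos hjN, if_pos hjN']
    · have hjN' : ¬(j ∈ N ∧ c + 1 ≤ (j : ℕ)) := fun h => hjN ⟨h.1, by omega⟩
      rw [if_neg hjN, if_neg hjN', Function.update_of_ne hj]

lemma ovr_succ_not_mem {N : Finset (Fin p)} {s : Fin p → ℝ} {c : ℕ} (hc : c < p)
    (hcN : (⟨c, hc⟩ : Fin p) ∉ N) (P : Finset (Fin p)) :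
    ovr N s c P = ovr N s (c + 1) P := by
  funext j
  unfold ovr
  by_cases hj : j = (⟨c, hc⟩ : Fin p)
  · subst hj
    rw [if_neg (fun h => hcN h.1), if_neg (fun h => hcN h.1)]
  · have hjc : (j : ℕ) ≠ c := fun h => hj (Fin.ext h)
    by_cases hjN : j ∈ N ∧ c ≤ (j : ℕ)
    · have hjN' : j ∈ N ∧ c + 1 ≤ (j : ℕ) := ⟨hjN.1, by omega⟩
      rw [if_pos hjN, if_pos hjN']
    · rw [if_neg hjN, if_neg (fun h => hjN ⟨h.1, by omega⟩)]

lemma filter_succ_of_not_mem {N : Finset (Fin p)} {c : ℕ} (hc : c < p)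
    (hcN : (⟨c, hc⟩ : Fin p) ∉ N) (pr : Fin p → Prop) :
    (N.filter fun j : Fin p => c ≤ (j : ℕ) ∧ pr j)
      = N.filter fun j : Fin p => c + 1 ≤ (j : ℕ) ∧ pr j := by
  ext j
  simp only [Finset.mem_filter]
  constructor
  · rintro ⟨hjN, hcj, hpr⟩
    have : (j : ℕ) ≠ c := fun h => hcN ((Fin.ext h : j = ⟨c, hc⟩) ▸ hjN)
    exact ⟨hjN, by omega, hpr⟩
  · rintro ⟨hjN, hcj, hpr⟩
    exact ⟨hjN, by omega, hpr⟩

lemma Nc_eq_of_not_mem {N : Finset (Fin p)} {c : ℕ} (hc : c < p)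
    (hcN : (⟨c, hc⟩ : Fin p) ∉ N) :
    (N.filter fun j : Fin p => c ≤ (j : ℕ)) = N.filter fun j : Fin p => c + 1 ≤ (j : ℕ) := by
  ext j
  simp only [Finset.mem_filter]
  constructor
  · rintro ⟨hjN, hcj⟩
    have : (j : ℕ) ≠ c := fun h => hcN ((Fin.ext h : j = ⟨c, hc⟩) ▸ hjN)
    exact ⟨hjN, by omega⟩
  · rintro ⟨hjN, hcj⟩
    exact ⟨hjN, by omega⟩

lemma Nc_insert_of_mem {N : Finset (Fin p)} {c : ℕ} {hc : c < p}
    (hcN : (⟨c, hc⟩ : Fin p) ∈ N) :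
    (N.filter fun j : Fin p => c ≤ (j : ℕ))
      = insert ⟨c, hc⟩ (N.filter fun j : Fin p => c + 1 ≤ (j : ℕ)) := by
  ext j
  simp only [Finset.mem_filter, Finset.mem_insert]
  constructor
  · rintro ⟨hjN, hcj⟩
    by_cases hj : (j : ℕ) = c
    · exact Or.inl (Fin.ext hj)
    · exact Or.inr ⟨hjN, by omega⟩
  · rintro (rfl | ⟨hjN, hcj⟩)
    · exact ⟨hcN, le_refl c⟩
    · exact ⟨hjN, by omega⟩

lemma nullP_le_card {N : Finset (Fin p)} {s : Fin p → ℝ} {c : ℕ} :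
    nullP N c s ≤ (N.filter fun j : Fin p => c ≤ (j : ℕ)).card := by
  apply Finset.card_le_card
  intro j hj
  simp only [Finset.mem_filter] at hj ⊢
  exact ⟨hj.1, hj.2.1⟩

noncomputable def RHSval (q : ℝ) (N : Finset (Fin p)) (s : Fin p → ℝ) (c : ℕ) : ℝ :=
  if ((signFeasible p q s).filter (· < c)).Nonempty then stopVal q N s else Mval N c s

lemma key_base {q : ℝ} {N : Finset (Fin p)} {c : ℕ} (hpc : p ≤ c) (s : Fin p → ℝ) :
    ∑ P ∈ (N.filter fun j : Fin p => c ≤ (j : ℕ)).powersetCard (nullP N c s),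
        stopVal q N (ovr N s c P)
      ≤ ((N.filter fun j : Fin p => c ≤ (j : ℕ)).card.choose (nullP N c s) : ℝ)
          * RHSval q N s c := by
  have hNc : (N.filter fun j : Fin p => c ≤ (j : ℕ)) = ∅ := by
    rw [Finset.filter_eq_empty_iff]
    intro j _
    have := j.2
    omega
  have hA : nullP N c s = 0 := by
    have := nullP_le_card (N := N) (s := s) (c := c)
    rw [hNc] at this
    simpa using this
  have hovr : ovr N s c ∅ = s := by
    funext j
    unfold ovr
    rw [if_neg (by rintro ⟨-, h⟩; have := j.2; omega)]
  rw [hNc, hA, Finset.powersetCard_zero, Finset.sum_singleton, hovr]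
  simp only [Finset.card_empty, Nat.choose_self, Nat.cast_one, one_mul]
  unfold RHSval
  split_ifs with h
  · exact le_refl _
  · have hne : ¬ (signFeasible p q s).Nonempty := by
      intro ⟨k, hk⟩
      have hkp : k < p := (mem_signFeasible.mp hk).1
      exact h ⟨k, Finset.mem_filter.mpr ⟨hk, by omega⟩⟩
    rw [stopVal, dif_neg hne]
    unfold Mval
    positivity
lemma key (q : ℝ) (N : Finset (Fin p)) :
    ∀ d c, p ≤ c + d → ∀ s : Fin p → ℝ, (∀ j, s j = 1 ∨ s j = -1) →
    ∑ P ∈ (N.filter fun j : Fin p => c ≤ (j : ℕ)).powersetCard (nullP N c s),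
        stopVal q N (ovr N s c P)
      ≤ ((N.filter fun j : Fin p => c ≤ (j : ℕ)).card.choose (nullP N c s) : ℝ)
          * RHSval q N s c := by
  intro d
  induction d with
  | zero => intro c hpc s _; exact key_base (by omega) s
  | succ d ih =>
    intro c hpc s hs
    by_cases hpc' : p ≤ c
    · exact key_base hpc' s
    push_neg at hpc'
    have hc : c < p := hpc'
    by_cases h1 : ((signFeasible p q s).filter (· < c)).Nonempty
    · -- case (i): the stopping time has already occurred before c
      have hconst : ∀ P ∈ (N.filter fun j : Fin p => c ≤ (j : ℕ)).powersetCard (nullP N c s),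
          stopVal q N (ovr N s c P) = stopVal q N s := by
        intro P hP
        rw [Finset.mem_powersetCard] at hP
        exact stopVal_ovr_of_lt hs hP.1 hP.2 h1
      rw [Finset.sum_congr rfl hconst, Finset.sum_const, Finset.card_powersetCard,
        nsmul_eq_mul]
      simp only [RHSval, if_pos h1]
      exact le_refl _
    by_cases h2 : c ∈ signFeasible p q s
    · -- case (i'): the stopping time is exactly c
      have hconst : ∀ P ∈ (N.filter fun j : Fin p => c ≤ (j : ℕ)).powersetCard (nullP N c s),
          stopVal q N (ovr N s c P) = Mval N c s := by
        intro P hP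
        rw [Finset.mem_powersetCard] at hP
        exact stopVal_ovr_of_eq hs hP.1 hP.2 h1 h2
      rw [Finset.sum_congr rfl hconst, Finset.sum_const, Finset.card_powersetCard,
        nsmul_eq_mul]
      simp only [RHSval, if_neg h1]
      exact le_refl _
    by_cases hA0 : nullP N c s = 0
    · -- case A = 0
      rw [hA0, Finset.powersetCard_zero, Finset.sum_singleton,
        stopVal_ovr_of_empty hs hA0 h1 h2]
      have hM : RHSval q N s c = 0 := by
        unfold RHSval
        rw [if_neg h1]
        unfold Mval
        rw [hA0]
        simp
      rw [hM, mul_zero]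
    by_cases hcN : (⟨c, hc⟩ : Fin p) ∈ N
    · -- hard case: c is a null index
      set c' : Fin p := ⟨c, hc⟩ with hc'def
      obtain ⟨A', hA'⟩ : ∃ A', nullP N c s = A' + 1 := ⟨nullP N c s - 1, by omega⟩
      set Nc1 := N.filter fun j : Fin p => c + 1 ≤ (j : ℕ) with hNc1
      have hc'notin : c' ∉ Nc1 := by
        intro hmem
        rw [hNc1, Finset.mem_filter] at hmem
        have hcv : (c' : ℕ) = c := rfl
        omega
      have hNc : (N.filter fun j : Fin p => c ≤ (j : ℕ)) = insert c' Nc1 :=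
        Nc_insert_of_mem hcN
      have hn : (N.filter fun j : Fin p => c ≤ (j : ℕ)).card = Nc1.card + 1 := by
        rw [hNc, Finset.card_insert_of_notMem hc'notin]
      have hAle : A' + 1 ≤ Nc1.card + 1 := by
        have := nullP_le_card (N := N) (s := s) (c := c)
        omega
      have hfe_lift : ∀ (P : Finset (Fin p)), P ⊆ N.filter (fun j : Fin p => c ≤ (j : ℕ)) →
          P.card = nullP N c s →
          ¬ ((signFeasible p q (ovr N s c P)).filter (· < c + 1)).Nonempty := by
        intro P hPsub hPcard
        rintro ⟨k, hk⟩
        rw [Finset.mem_filter] at hk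
        have hkc : k ≤ c := by omega
        have hmem := (mem_signFeasible_ovr (q := q) hs hkc hPsub hPcard).mp hk.1
        rcases lt_or_eq_of_le hkc with h | rfl
        · exact h1 ⟨k, Finset.mem_filter.mpr ⟨hmem, h⟩⟩
        · exact h2 hmem
      -- split the sum
      rw [hA', hNc, Finset.powersetCard_succ_insert hc'notin, Finset.sum_union (by
          rw [Finset.disjoint_left]
          intro P hP hP2
          rw [Finset.mem_powersetCard] at hP
          obtain ⟨P', hP', rfl⟩ := Finset.mem_image.mp hP2
          exact hc'notin (hP.1 (Finset.mem_insert_self c' P'))),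
        Finset.sum_image (by
          intro P1 hP1 P2 hP2 he
          rw [Finset.mem_coe, Finset.mem_powersetCard] at hP1 hP2
          have e1 : c' ∉ P1 := fun h => hc'notin (hP1.1 h)
          have e2 : c' ∉ P2 := fun h => hc'notin (hP2.1 h)
          have := congrArg (fun t => Finset.erase t c') he
          simpa [Finset.erase_insert e1, Finset.erase_insert e2] using this)]
      -- the plus branch
      obtain ⟨Q, hQsub, hQcard⟩ :=
        Finset.exists_subset_card_eq (s := Nc1) (n := A') (by omega)
      have hSp : ∑ P' ∈ Nc1.powersetCard A', stopVal q N (ovr N s c (insert c' P'))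
          ≤ (Nc1.card.choose A' : ℝ)
              * ((A' : ℝ) / (1 + ((Nc1.card - A' : ℕ) : ℝ))) := by
        set sp := Function.update s c' (1 : ℝ) with hsp
        have hsps : ∀ j, sp j = 1 ∨ sp j = -1 := by
          intro j
          by_cases hj : j = c'
          · subst hj; left; rw [hsp, Function.update_self]
          · rw [hsp, Function.update_of_ne hj]; exact hs j
        set r := ovr N sp (c + 1) Q with hrdef
        have hrs := hs_ovr (N := N) hsps (c + 1) Q
        have hr_eq : ovr N s c (insert c' Q) = r := by
          rw [hrdef, hsp, ovr_insert hcN hQsub]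
        have hinsQ : insert c' Q ⊆ N.filter fun j : Fin p => c ≤ (j : ℕ) := by
          rw [hNc]
          exact Finset.insert_subset_insert _ hQsub
        have hinsQcard : (insert c' Q).card = nullP N c s := by
          rw [Finset.card_insert_of_notMem (fun h => hc'notin (hQsub h)), hQcard, hA']
        have hrP : nullP N (c + 1) r = A' := by
          rw [hrdef, nullP_ovr_self hQsub, hQcard]
        have hrN : nullN N (c + 1) r = Nc1.card - A' := by
          rw [hrdef, nullN_ovr_self hQsub, hQcard, ← hNc1]
        have hfer : ¬ ((signFeasible p q r).filter (· < c + 1)).Nonempty := by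
          rw [← hr_eq]
          exact hfe_lift _ hinsQ hinsQcard
        have hterm : ∀ P' ∈ Nc1.powersetCard A',
            stopVal q N (ovr N s c (insert c' P')) = stopVal q N (ovr N r (c + 1) P') := by
          intro P' hP'
          rw [Finset.mem_powersetCard] at hP'
          rw [ovr_insert hcN hP'.1, ← hsp, hrdef, ovr_ovr]
        rw [Finset.sum_congr rfl hterm]
        have hIH := ih (c + 1) (by omega) r hrs
        rw [hrP, ← hNc1] at hIH
        refine le_trans hIH (le_of_eq ?_)
        congr 1
        simp only [RHSval, if_neg hfer]
        unfold Mval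
        rw [hrP, hrN]
      -- the minus branch
      have hSm : ∑ P ∈ Nc1.powersetCard (A' + 1), stopVal q N (ovr N s c P)
          ≤ (Nc1.card.choose (A' + 1) : ℝ)
              * (((A' + 1 : ℕ) : ℝ) / (1 + ((Nc1.card - (A' + 1) : ℕ) : ℝ))) := by
        by_cases hB : A' + 1 ≤ Nc1.card
        · obtain ⟨Q2, hQ2sub, hQ2card⟩ :=
            Finset.exists_subset_card_eq (s := Nc1) (n := A' + 1) hB
          set sm := Function.update s c' (-1 : ℝ) with hsm
          have hsms : ∀ j, sm j = 1 ∨ sm j = -1 := by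
            intro j
            by_cases hj : j = c'
            · subst hj; right; rw [hsm, Function.update_self]
            · rw [hsm, Function.update_of_ne hj]; exact hs j
          set r2 := ovr N sm (c + 1) Q2 with hr2def
          have hr2s := hs_ovr (N := N) hsms (c + 1) Q2
          have hc'Q2 : c' ∉ Q2 := fun h => hc'notin (hQ2sub h)
          have hr2_eq : ovr N s c Q2 = r2 := by
            rw [hr2def, hsm, ovr_nomem hcN hc'Q2]
          have hQ2Nc : Q2 ⊆ N.filter fun j : Fin p => c ≤ (j : ℕ) := by
            rw [hNc]
            exact subset_trans hQ2sub (Finset.subset_insert _ _)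
          have hQ2card' : Q2.card = nullP N c s := by rw [hQ2card, hA']
          have hr2P : nullP N (c + 1) r2 = A' + 1 := by
            rw [hr2def, nullP_ovr_self hQ2sub, hQ2card]
          have hr2N : nullN N (c + 1) r2 = Nc1.card - (A' + 1) := by
            rw [hr2def, nullN_ovr_self hQ2sub, hQ2card, ← hNc1]
          have hfer : ¬ ((signFeasible p q r2).filter (· < c + 1)).Nonempty := by
            rw [← hr2_eq]
            exact hfe_lift _ hQ2Nc hQ2card'
          have hterm : ∀ P ∈ Nc1.powersetCard (A' + 1),
              stopVal q N (ovr N s c P) = stopVal q N (ovr N r2 (c + 1) P) := by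
            intro P hP
            rw [Finset.mem_powersetCard] at hP
            have hc'P : c' ∉ P := fun h => hc'notin (hP.1 h)
            rw [ovr_nomem hcN hc'P, ← hsm, hr2def, ovr_ovr]
          rw [Finset.sum_congr rfl hterm]
          have hIH := ih (c + 1) (by omega) r2 hr2s
          rw [hr2P, ← hNc1] at hIH
          refine le_trans hIH (le_of_eq ?_)
          congr 1
          simp only [RHSval, if_neg hfer]
          unfold Mval
          rw [hr2P, hr2N]
        · have hemp : Nc1.powersetCard (A' + 1) = ∅ :=
            Finset.powersetCard_eq_empty.mpr (by omega)
          rw [hemp, Finset.sum_empty]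
          positivity
      refine le_trans (add_le_add hSm hSp) ?_
      -- arithmetic
      have hnn : nullN N c s = Nc1.card - A' := by
        have h := nullP_add_nullN (N := N) (c := c) hs
        rw [hA', hn] at h
        omega
      simp only [RHSval, if_neg h1]
      unfold Mval
      rw [hA', hnn, Finset.card_insert_of_notMem hc'notin]
      by_cases hB : A' + 1 ≤ Nc1.card
      · -- main numeric inequality
        have hc1 : (1 : ℝ) + ((Nc1.card - (A' + 1) : ℕ) : ℝ) = ((Nc1.card - A' : ℕ) : ℝ) := by
          have h5 : Nc1.card - (A' + 1) + 1 = Nc1.card - A' := by omega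
          rw [← h5]
          push_cast
          ring
        have hca : ((A' + 1 : ℕ) : ℝ) = (A' : ℝ) + 1 := by push_cast; ring
        rw [hc1, hca]
        have habn : (A' : ℝ) + ((Nc1.card - A' : ℕ) : ℝ) = (Nc1.card : ℝ) := by
          have h5 : A' + (Nc1.card - A') = Nc1.card := by omega
          exact_mod_cast congrArg (fun x : ℕ => (x : ℝ)) h5
        have id1 : (Nc1.card + 1) * Nc1.card.choose A'
            = (Nc1.card + 1).choose (A' + 1) * (A' + 1) := by
          have h3 := Nat.add_one_mul_choose_eq Nc1.card A'
          simpa [Nat.succ_eq_add_one] using h3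
        have id2 : (Nc1.card + 1) * Nc1.card.choose (A' + 1)
            = (Nc1.card + 1).choose (A' + 1) * (Nc1.card - A') := by
          have h3 := Nat.add_one_mul_choose_eq Nc1.card (A' + 1)
          have h4 := Nat.choose_succ_right_eq (Nc1.card + 1) (A' + 1)
          have h5 : Nc1.card + 1 - (A' + 1) = Nc1.card - A' := by omega
          rw [h5] at h4
          omega
        have id1' : ((Nc1.card : ℝ) + 1) * (Nc1.card.choose A' : ℝ)
            = ((Nc1.card + 1).choose (A' + 1) : ℝ) * ((A' : ℝ) + 1) := by
          exact_mod_cast congrArg (fun x : ℕ => (x : ℝ)) id1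
        have id2' : ((Nc1.card : ℝ) + 1) * (Nc1.card.choose (A' + 1) : ℝ)
            = ((Nc1.card + 1).choose (A' + 1) : ℝ) * ((Nc1.card - A' : ℕ) : ℝ) := by
          exact_mod_cast congrArg (fun x : ℕ => (x : ℝ)) id2
        have hβ : (1 : ℝ) ≤ ((Nc1.card - A' : ℕ) : ℝ) := by
          have : 1 ≤ Nc1.card - A' := by omega
          exact_mod_cast this
        have ha : (0 : ℝ) ≤ (A' : ℝ) := Nat.cast_nonneg A'
        set a : ℝ := (A' : ℝ) with hadef
        set β : ℝ := ((Nc1.card - A' : ℕ) : ℝ) with hβdef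
        set c1 : ℝ := (Nc1.card.choose (A' + 1) : ℝ) with hc1def
        set c2 : ℝ := (Nc1.card.choose A' : ℝ) with hc2def
        set x : ℝ := ((Nc1.card + 1).choose (A' + 1) : ℝ) with hxdef
        have h2' : (a + β + 1) * c2 = x * (a + 1) := by
          have hab : a + β = (Nc1.card : ℝ) := habn
          linear_combination id1' + c2 * hab
        have h1' : (a + β + 1) * c1 = x * β := by
          have hab : a + β = (Nc1.card : ℝ) := habn
          linear_combination id2' + c1 * hab
        have hβ0 : (0 : ℝ) < β := by linarith
        have h1β : (0 : ℝ) < 1 + β := by linarith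
        have hsum0 : (0 : ℝ) < a + β + 1 := by linarith
        have hcc1 : c1 = x * β / (a + β + 1) := by
          rw [eq_div_iff hsum0.ne']
          linarith [h1']
        have hcc2 : c2 = x * (a + 1) / (a + β + 1) := by
          rw [eq_div_iff hsum0.ne']
          linarith [h2']
        have heq : c1 * ((a + 1) / β) + c2 * (a / (1 + β)) = x * ((a + 1) / (1 + β)) := by
          rw [hcc1, hcc2]
          field_simp
          ring
        exact le_of_eq heq
      · -- degenerate case: Nc1.card = A'
        have hn1A : Nc1.card = A' := by omega
        have hz : Nc1.card.choose (A' + 1) = 0 := Nat.choose_eq_zero_of_lt (by omega)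
        have hz2 : Nc1.card - (A' + 1) = 0 := by omega
        have hz3 : Nc1.card - A' = 0 := by omega
        rw [hz, hz2, hz3, hn1A]
        simp only [Nat.choose_self, Nat.cast_zero, Nat.cast_one, zero_mul, one_mul,
          add_zero, zero_add]
        push_cast
        rw [div_le_div_iff₀ (by norm_num) (by norm_num)]
        ring_nf
        linarith
    · -- easy case: c is not a null index
      have hA : nullP N c s = nullP N (c + 1) s := by
        unfold nullP
        rw [filter_succ_of_not_mem hc hcN]
      have hBv : nullN N c s = nullN N (c + 1) s := by
        unfold nullN
        rw [filter_succ_of_not_mem hc hcN]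
      have hNc := Nc_eq_of_not_mem hc hcN
      rw [hNc, hA]
      have hterm : ∀ P ∈ (N.filter fun j : Fin p => c + 1 ≤ (j : ℕ)).powersetCard
          (nullP N (c + 1) s),
          stopVal q N (ovr N s c P) = stopVal q N (ovr N s (c + 1) P) := by
        intro P _
        rw [ovr_succ_not_mem hc hcN]
      rw [Finset.sum_congr rfl hterm]
      refine le_trans (ih (c + 1) (by omega) s hs) (le_of_eq ?_)
      congr 1
      have hfe : ¬ ((signFeasible p q s).filter (· < c + 1)).Nonempty := by
        rintro ⟨k, hk⟩
        rw [Finset.mem_filter] at hk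
        have hkc : k ≤ c := by omega
        rcases lt_or_eq_of_le hkc with h | rfl
        · exact h1 ⟨k, Finset.mem_filter.mpr ⟨hk.1, h⟩⟩
        · exact h2 hk.1
      simp only [RHSval, if_neg h1, if_neg hfe]
      unfold Mval
      rw [hA, hBv]

lemma total (q : ℝ) (N : Finset (Fin p)) (s : Fin p → ℝ) (hs : ∀ j, s j = 1 ∨ s j = -1) :
    ∑ P ∈ N.powerset, stopVal q N (ovr N s 0 P) ≤ (2 : ℝ) ^ N.card := by
  have hN0 : (N.filter fun j : Fin p => 0 ≤ (j : ℕ)) = N := by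
    apply Finset.filter_true_of_mem
    intro j _
    exact Nat.zero_le _
  rw [Finset.sum_powerset]
  have hbound : ∀ i ∈ Finset.range (N.card + 1),
      ∑ P ∈ N.powersetCard i, stopVal q N (ovr N s 0 P)
        ≤ (N.card.choose i : ℝ) * ((i : ℝ) / (1 + ((N.card - i : ℕ) : ℝ))) := by
    intro i hi
    rw [Finset.mem_range] at hi
    obtain ⟨Q, hQsub, hQcard⟩ := Finset.exists_subset_card_eq (s := N) (n := i) (by omega)
    have hQsub' : Q ⊆ N.filter fun j : Fin p => 0 ≤ (j : ℕ) := by rw [hN0]; exact hQsub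
    set r := ovr N s 0 Q with hrdef
    have hrs := hs_ovr (N := N) hs 0 Q
    have hrP : nullP N 0 r = i := by rw [hrdef, nullP_ovr_self hQsub', hQcard]
    have hrN : nullN N 0 r = N.card - i := by
      rw [hrdef, nullN_ovr_self hQsub', hQcard, hN0]
    have hterm : ∀ P ∈ N.powersetCard i,
        stopVal q N (ovr N s 0 P) = stopVal q N (ovr N r 0 P) := by
      intro P _
      rw [hrdef, ovr_ovr]
    rw [Finset.sum_congr rfl hterm]
    have hIH := key q N p 0 (by omega) r hrs
    rw [hrP, hN0] at hIH
    have hfe : ¬ ((signFeasible p q r).filter (· < 0)).Nonempty := by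
      rintro ⟨k, hk⟩
      rw [Finset.mem_filter] at hk
      omega
    refine le_trans hIH (le_of_eq ?_)
    congr 1
    simp only [RHSval, if_neg hfe]
    unfold Mval
    rw [hrP, hrN]
  refine le_trans (Finset.sum_le_sum hbound) ?_
  have hstep : ∀ i ∈ Finset.range (N.card + 1),
      (N.card.choose i : ℝ) * ((i : ℝ) / (1 + ((N.card - i : ℕ) : ℝ)))
        ≤ if i = 0 then 0 else (N.card.choose (i - 1) : ℝ) := by
    intro i hi
    rw [Finset.mem_range] at hi
    match i, hi with
    | 0, _ => simp
    | (j+1), hi =>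
      simp only [Nat.add_sub_cancel, if_neg (Nat.succ_ne_zero j)]
      have hj : j + 1 ≤ N.card := by omega
      have hc1 : (1 : ℝ) + ((N.card - (j + 1) : ℕ) : ℝ) = ((N.card - j : ℕ) : ℝ) := by
        have h5 : N.card - (j + 1) + 1 = N.card - j := by omega
        rw [← h5]
        push_cast
        ring
      rw [hc1]
      have hid : N.card.choose (j + 1) * (j + 1) = N.card.choose j * (N.card - j) :=
        Nat.choose_succ_right_eq N.card j
      have hid' : (N.card.choose (j + 1) : ℝ) * ((j + 1 : ℕ) : ℝ)
          = (N.card.choose j : ℝ) * ((N.card - j : ℕ) : ℝ) := by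
        exact_mod_cast congrArg (fun x : ℕ => (x : ℝ)) hid
      have hmj : (1 : ℝ) ≤ ((N.card - j : ℕ) : ℝ) := by
        have : 1 ≤ N.card - j := by omega
        exact_mod_cast this
      have hmj0 : (0 : ℝ) < ((N.card - j : ℕ) : ℝ) := by linarith
      rw [← mul_div_assoc, div_le_iff₀ hmj0]
      calc (N.card.choose (j + 1) : ℝ) * ((j + 1 : ℕ) : ℝ)
          = (N.card.choose j : ℝ) * ((N.card - j : ℕ) : ℝ) := hid'
        _ ≤ _ := le_refl _
  refine le_trans (Finset.sum_le_sum hstep) ?_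
  rw [Finset.sum_range_succ']
  have hifz : (if (0 : ℕ) = 0 then (0:ℝ) else ((N.card.choose (0 - 1) : ℕ) : ℝ)) = 0 := by
    simp
  have hifs : ∀ j : ℕ, (if j + 1 = 0 then (0:ℝ) else ((N.card.choose (j + 1 - 1) : ℕ) : ℝ))
      = ((N.card.choose j : ℕ) : ℝ) := by
    intro j
    rw [if_neg (Nat.succ_ne_zero j), Nat.add_sub_cancel]
  rw [hifz, add_zero, Finset.sum_congr rfl (fun j _ => hifs j)]
  have hcast : ∑ j ∈ Finset.range N.card, (N.card.choose j : ℝ)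
      = ((∑ j ∈ Finset.range N.card, N.card.choose j : ℕ) : ℝ) := by
    push_cast
    rfl
  rw [hcast]
  have hle : (∑ j ∈ Finset.range N.card, N.card.choose j) ≤ 2 ^ N.card := by
    have h := Nat.sum_range_choose N.card
    have hsub : ∑ j ∈ Finset.range N.card, N.card.choose j
        ≤ ∑ j ∈ Finset.range (N.card + 1), N.card.choose j := by
      apply Finset.sum_le_sum_of_subset
      exact Finset.range_subset_range.mpr (by omega)
    omega
  calc ((∑ j ∈ Finset.range N.card, N.card.choose j : ℕ) : ℝ)
      ≤ ((2 ^ N.card : ℕ) : ℝ) := by exact_mod_cast hle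
    _ = (2 : ℝ) ^ N.card := by push_cast; ring

noncomputable def FDP (q : ℝ) (N : Finset (Fin p)) (s : Fin p → ℝ) : ℝ :=
  ((signReject p q s ∩ N).card : ℝ) / max ((signReject p q s).card : ℝ) 1

lemma FDP_nonneg (q : ℝ) (N : Finset (Fin p)) (s : Fin p → ℝ) : 0 ≤ FDP q N s := by
  unfold FDP
  positivity

lemma stopVal_nonneg (q : ℝ) (N : Finset (Fin p)) (s : Fin p → ℝ) : 0 ≤ stopVal q N s := by
  unfold stopVal
  split_ifs
  · unfold Mval; positivity
  · exact le_refl 0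

lemma FDP_le (q : ℝ) (hq0 : 0 < q) (N : Finset (Fin p)) (s : Fin p → ℝ) :
    FDP q N s ≤ q * stopVal q N s := by
  unfold FDP signReject stopVal
  split_ifs with h
  · set k₀ := (signFeasible p q s).min' h with hk₀
    have hmem := Finset.min'_mem _ h
    rw [mem_signFeasible] at hmem
    have hcard1 : ((Finset.univ.filter fun j : Fin p => k₀ ≤ (j : ℕ) ∧ s j = 1) ∩ N)
        = N.filter fun j : Fin p => k₀ ≤ (j : ℕ) ∧ s j = 1 := by
      ext j
      simp only [Finset.mem_inter, Finset.mem_filter, Finset.mem_univ, true_and]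
      tauto
    rw [hcard1]
    have hnn : (nullN N k₀ s : ℝ) ≤ (negC k₀ s : ℝ) := by
      have : nullN N k₀ s ≤ negC k₀ s := by
        apply Finset.card_le_card
        intro j hj
        rw [Finset.mem_filter] at hj ⊢
        exact ⟨Finset.mem_univ j, hj.2⟩
      exact_mod_cast this
    have hmax : (0 : ℝ) < max ((posC k₀ s : ℕ) : ℝ) 1 :=
      lt_of_lt_of_le one_pos (le_max_right _ _)
    have hfeas : 1 + (negC k₀ s : ℝ) ≤ q * max ((posC k₀ s : ℕ) : ℝ) 1 := by
      have := (div_le_iff₀ hmax).mp hmem.2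
      linarith
    have hden : (0 : ℝ) < 1 + (nullN N k₀ s : ℝ) := by positivity
    unfold Mval
    have hcc : ((N.filter fun j : Fin p => k₀ ≤ (j : ℕ) ∧ s j = 1).card : ℝ)
        = (nullP N k₀ s : ℝ) := rfl
    have hcc2 : ((Finset.univ.filter fun j : Fin p => k₀ ≤ (j : ℕ) ∧ s j = 1).card : ℝ)
        = (posC k₀ s : ℝ) := rfl
    rw [hcc, hcc2, mul_div_assoc']
    rw [div_le_div_iff₀ hmax hden]
    have hnp : (0 : ℝ) ≤ (nullP N k₀ s : ℝ) := Nat.cast_nonneg _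
    nlinarith [hnn, hfeas, hnp, hmax]
  · simp

lemma combo {p : ℕ} (q : ℝ) (hq0 : 0 < q) (N : Finset (Fin p)) (s : Fin p → ℝ)
    (hs : ∀ j, s j = 1 ∨ s j = -1) :
    ∑ P ∈ N.powerset, FDP q N (ovr N s 0 P) ≤ q * 2 ^ N.card := by
  calc ∑ P ∈ N.powerset, FDP q N (ovr N s 0 P)
      ≤ ∑ P ∈ N.powerset, q * stopVal q N (ovr N s 0 P) :=
        Finset.sum_le_sum fun P _ => FDP_le q hq0 N _
    _ = q * ∑ P ∈ N.powerset, stopVal q N (ovr N s 0 P) := by rw [← Finset.mul_sum]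
    _ ≤ q * 2 ^ N.card :=
        mul_le_mul_of_nonneg_left (total q N s hs) (le_of_lt hq0)

end KF

/-- if, conditional on the non-null signs, the null signs `(σ_j)_{j ∈ N}`
are i.i.d. uniform on `{-1,+1}` (expressed by the exact factorization of the law of `σ`),
then the knockoff filter at level `q ∈ (0,1)` controls the FDR over the null set `N`:
`E[#(R ∩ N)/max(#R,1)] ≤ q`. -/
theorem knockoff_filter_fdr_control {Ω : Type*} [MeasurableSpace Ω]
    (μ : Measure Ω) [IsProbabilityMeasure μ] (p : ℕ) (q : ℝ) (hq0 : 0 < q) (hq1 : q < 1)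
    (N : Finset (Fin p)) (σ : Fin p → Ω → ℝ) (hmeas : ∀ j, Measurable (σ j))
    (hval : ∀ j ω, σ j ω = 1 ∨ σ j ω = -1)
    (hcond : ∀ s : Fin p → ℝ, (∀ j, s j = 1 ∨ s j = -1) →
      μ {ω | ∀ j, σ j ω = s j} =
        ((1 : ℝ≥0∞)/2) ^ N.card * μ {ω | ∀ j ∉ N, σ j ω = s j}) :
    ∫ ω, (((signReject p q fun j => σ j ω) ∩ N).card : ℝ) /
        max ((signReject p q fun j => σ j ω).card : ℝ) 1 ∂μ ≤ q := by
  classical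
  set Sgn : (Fin p → Bool) → (Fin p → ℝ) := fun b j => if b j then 1 else -1 with hSgn
  have hSgnval : ∀ b j, Sgn b j = 1 ∨ Sgn b j = -1 := by
    intro b j
    by_cases h : b j
    · left; simp [hSgn, h]
    · right; simp [hSgn, h]
  set E : (Fin p → Bool) → Set Ω := fun b => {ω | ∀ j, σ j ω = Sgn b j} with hE
  set F : (Fin p → Bool) → Set Ω := fun b => {ω | ∀ j ∉ N, σ j ω = Sgn b j} with hF
  have hEmeas : ∀ b, MeasurableSet (E b) := by
    intro b
    have he : E b = ⋂ j, σ j ⁻¹' {Sgn b j} := by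
      ext ω
      simp [hE, Set.mem_iInter]
    rw [he]
    exact MeasurableSet.iInter fun j => (hmeas j) (measurableSet_singleton _)
  have hFmeas : ∀ b, MeasurableSet (F b) := by
    intro b
    have he : F b = ⋂ j, ⋂ (_ : j ∉ N), σ j ⁻¹' {Sgn b j} := by
      ext ω
      simp [hF, Set.mem_iInter]
    rw [he]
    exact MeasurableSet.iInter fun j => MeasurableSet.iInter fun _ =>
      (hmeas j) (measurableSet_singleton _)
  have hμE : ∀ b, μ (E b) = ((1 : ℝ≥0∞)/2) ^ N.card * μ (F b) := by
    intro b
    exact hcond (Sgn b) (hSgnval b)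
  have hμEreal : ∀ b, (μ (E b)).toReal = (1/2 : ℝ) ^ N.card * (μ (F b)).toReal := by
    intro b
    rw [hμE b, ENNReal.toReal_mul]
    congr 1
    simp
  -- pointwise decomposition of the integrand
  have hdecomp : ∀ ω, KF.FDP q N (fun j => σ j ω)
      = ∑ b : Fin p → Bool, (E b).indicator (fun _ => KF.FDP q N (Sgn b)) ω := by
    intro ω
    set b₀ : Fin p → Bool := fun j => if σ j ω = 1 then true else false with hb₀
    have hSb₀ : Sgn b₀ = fun j => σ j ω := by
      funext j
      by_cases h : σ j ω = 1
      · have hbj : b₀ j = true := if_pos h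
        have hv : Sgn b₀ j = 1 := by
          show (if b₀ j = true then (1:ℝ) else -1) = 1
          rw [hbj]
          simp
        rw [hv, h]
      · have h2 : σ j ω = -1 := (hval j ω).resolve_left h
        have hbj : b₀ j = false := if_neg h
        have hv : Sgn b₀ j = -1 := by
          show (if b₀ j = true then (1:ℝ) else -1) = -1
          rw [hbj]
          simp
        rw [hv, h2]
    have hωE : ω ∈ E b₀ := by
      intro j
      exact (congrFun hSb₀ j).symm
    rw [Finset.sum_eq_single_of_mem b₀ (Finset.mem_univ b₀)]
    · rw [Set.indicator_of_mem hωE, hSb₀]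
    · intro b _ hbne
      apply Set.indicator_of_notMem
      intro hωb
      apply hbne
      funext j
      have h1 : σ j ω = Sgn b j := hωb j
      by_cases hb : b j
      · have hσ : σ j ω = 1 := by rw [h1]; simp [hSgn, hb]
        simp [hb₀, hb, hσ]
      · have hσ : σ j ω = -1 := by rw [h1]; simp [hSgn, hb]
        have hne : ¬ (σ j ω = 1) := by rw [hσ]; norm_num
        simp [hb₀, hb, hne]
  -- compute the integral
  have hint : ∫ ω, KF.FDP q N (fun j => σ j ω) ∂μ
      = ∑ b : Fin p → Bool, (μ (E b)).toReal * KF.FDP q N (Sgn b) := by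
    have hfun : (fun ω => KF.FDP q N (fun j => σ j ω))
        = fun ω => ∑ b : Fin p → Bool, (E b).indicator (fun _ => KF.FDP q N (Sgn b)) ω :=
      funext hdecomp
    rw [hfun, MeasureTheory.integral_finset_sum _
      (fun b _ => (MeasureTheory.integrable_const _).indicator (hEmeas b))]
    refine Finset.sum_congr rfl fun b _ => ?_
    rw [MeasureTheory.integral_indicator_const _ (hEmeas b), smul_eq_mul]
    rfl
  -- canonical representative
  set cano : (Fin p → Bool) → (Fin p → Bool) := fun b j => if j ∈ N then false else b j
    with hcano
  have hcano_idem : ∀ b, cano (cano b) = cano b := by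
    intro b
    funext j
    by_cases hj : j ∈ N <;> simp [hcano, hj]
  have hgroup : ∑ b : Fin p → Bool, (μ (E b)).toReal * KF.FDP q N (Sgn b)
      = ∑ u : Fin p → Bool, ∑ b ∈ Finset.univ.filter (fun b => cano b = u),
          (μ (E b)).toReal * KF.FDP q N (Sgn b) :=
    (Finset.sum_fiberwise Finset.univ cano _).symm
  have hinner : ∀ u : Fin p → Bool,
      ∑ b ∈ Finset.univ.filter (fun b => cano b = u), (μ (E b)).toReal * KF.FDP q N (Sgn b)
        ≤ q * (if cano u = u then (μ (F u)).toReal else 0) := by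
    intro u
    by_cases hu : cano u = u
    · rw [if_pos hu]
      have huN : ∀ j ∈ N, u j = false := by
        intro j hj
        have := congrFun hu j
        simpa [hcano, hj] using this.symm
      have hFb : ∀ b ∈ Finset.univ.filter (fun b => cano b = u), F b = F u := by
        intro b hb
        rw [Finset.mem_filter] at hb
        have hoff : ∀ j ∉ N, b j = u j := by
          intro j hj
          have := congrFun hb.2 j
          simpa [hcano, hj] using this
        have hSgneq : ∀ j ∉ N, Sgn b j = Sgn u j := by
          intro j hj
          simp [hSgn, hoff j hj]
        ext ω
        simp only [hF, Set.mem_setOf_eq]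
        exact ⟨fun h j hj => (h j hj).trans (hSgneq j hj),
          fun h j hj => (h j hj).trans (hSgneq j hj).symm⟩
      have hbij : ∑ b ∈ Finset.univ.filter (fun b => cano b = u), KF.FDP q N (Sgn b)
          = ∑ P ∈ N.powerset, KF.FDP q N (KF.ovr N (Sgn u) 0 P) := by
        refine Finset.sum_bij' (fun b _ => N.filter (fun j => b j = true))
          (fun P _ => fun j => if j ∈ N then decide (j ∈ P) else u j)
          ?_ ?_ ?_ ?_ ?_
        · intro b _
          exact Finset.mem_powerset.mpr (Finset.filter_subset _ _)
        · intro P hP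
          rw [Finset.mem_powerset] at hP
          rw [Finset.mem_filter]
          refine ⟨Finset.mem_univ _, ?_⟩
          funext j
          by_cases hj : j ∈ N
          · simp [hcano, hj, huN j hj]
          · simp [hcano, hj]
        · intro b hb
          rw [Finset.mem_filter] at hb
          funext j
          by_cases hj : j ∈ N
          · simp only [if_pos hj]
            by_cases hbj : b j = true
            · have hmemf : j ∈ N.filter (fun j => b j = true) :=
                Finset.mem_filter.mpr ⟨hj, hbj⟩
              simp [hmemf, hbj]
            · have hni : j ∉ N.filter (fun j => b j = true) :=
                fun h => hbj (Finset.mem_filter.mp h).2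
              have hbf : b j = false := by
                cases hbb : b j
                · rfl
                · exact absurd hbb hbj
              simp [hni, hbf]
          · simp only [if_neg hj]
            have hbu : b j = u j := by
              simpa [hcano, hj] using congrFun hb.2 j
            exact hbu.symm
        · intro P hP
          rw [Finset.mem_powerset] at hP
          ext j
          rw [Finset.mem_filter]
          by_cases hj : j ∈ N
          · simp [hj]
          · simp only [if_neg hj]
            constructor
            · rintro ⟨hjN, -⟩
              exact absurd hjN hj
            · intro hjP
              exact absurd (hP hjP) hj
        · intro b hb
          rw [Finset.mem_filter] at hb
          show KF.FDP q N (Sgn b)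
            = KF.FDP q N (KF.ovr N (Sgn u) 0 (N.filter (fun j => b j = true)))
          congr 1
          funext j
          unfold KF.ovr
          by_cases hj : j ∈ N
          · rw [if_pos ⟨hj, Nat.zero_le _⟩]
            by_cases hbj : b j = true
            · have hmemf : j ∈ N.filter (fun j => b j = true) :=
                Finset.mem_filter.mpr ⟨hj, hbj⟩
              rw [if_pos hmemf]
              show (if b j = true then (1:ℝ) else -1) = 1
              rw [if_pos hbj]
            · have hni : j ∉ N.filter (fun j => b j = true) :=
                fun h => hbj (Finset.mem_filter.mp h).2
              rw [if_neg hni]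
              show (if b j = true then (1:ℝ) else -1) = -1
              rw [if_neg hbj]
          · have hnj : ¬ (j ∈ N ∧ 0 ≤ (j : ℕ)) := fun h => hj h.1
            rw [if_neg hnj]
            have hbu : b j = u j := by
              simpa [hcano, hj] using congrFun hb.2 j
            show (if b j = true then (1:ℝ) else -1) = Sgn u j
            rw [hbu]
      have hfib : ∑ b ∈ Finset.univ.filter (fun b => cano b = u), KF.FDP q N (Sgn b)
          ≤ q * 2 ^ N.card := by
        rw [hbij]
        exact KF.combo q hq0 N (Sgn u) (hSgnval u)
      have hnn : (0:ℝ) ≤ (μ (F u)).toReal := ENNReal.toReal_nonneg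
      calc ∑ b ∈ Finset.univ.filter (fun b => cano b = u),
            (μ (E b)).toReal * KF.FDP q N (Sgn b)
          = ∑ b ∈ Finset.univ.filter (fun b => cano b = u),
              (1/2 : ℝ) ^ N.card * (μ (F u)).toReal * KF.FDP q N (Sgn b) := by
            refine Finset.sum_congr rfl fun b hb => ?_
            rw [hμEreal b, hFb b hb]
        _ = (1/2 : ℝ) ^ N.card * (μ (F u)).toReal
              * ∑ b ∈ Finset.univ.filter (fun b => cano b = u), KF.FDP q N (Sgn b) := by
            rw [Finset.mul_sum]
        _ ≤ (1/2 : ℝ) ^ N.card * (μ (F u)).toReal * (q * 2 ^ N.card) := by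
            apply mul_le_mul_of_nonneg_left hfib
            positivity
        _ = q * (μ (F u)).toReal * ((1/2 : ℝ) ^ N.card * 2 ^ N.card) := by ring
        _ = q * (μ (F u)).toReal := by
            rw [← mul_pow]
            norm_num
    · rw [if_neg hu]
      have hempty : Finset.univ.filter (fun b : Fin p → Bool => cano b = u) = ∅ := by
        rw [Finset.filter_eq_empty_iff]
        intro b _
        intro hb
        apply hu
        calc cano u = cano (cano b) := by rw [hb]
          _ = cano b := hcano_idem b
          _ = u := hb
      rw [hempty, Finset.sum_empty, mul_zero]
  -- sum over canonical representatives
  have hcanon_sum : ∑ u : Fin p → Bool, (if cano u = u then (μ (F u)).toReal else 0) ≤ 1 := by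
    rw [← Finset.sum_filter]
    have hdisj : (↑(Finset.univ.filter fun u : Fin p → Bool => cano u = u) :
        Set (Fin p → Bool)).PairwiseDisjoint F := by
      intro u hu v hv huv
      rw [Finset.mem_coe, Finset.mem_filter] at hu hv
      rw [Function.onFun, Set.disjoint_left]
      intro ω hωu hωv
      apply huv
      funext j
      by_cases hj : j ∈ N
      · have h1 : u j = false := by
          have := congrFun hu.2 j
          simpa [hcano, hj] using this.symm
        have h2 : v j = false := by
          have := congrFun hv.2 j
          simpa [hcano, hj] using this.symm
        rw [h1, h2]
      · have h1 : σ j ω = Sgn u j := hωu j hj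
        have h2 : σ j ω = Sgn v j := hωv j hj
        have h3 : Sgn u j = Sgn v j := h1 ▸ h2
        by_cases hbu : u j = true <;> by_cases hbv : v j = true
        · rw [hbu, hbv]
        · exfalso
          have e1 : Sgn u j = 1 := by
            show (if u j = true then (1:ℝ) else -1) = 1
            rw [if_pos hbu]
          have e2 : Sgn v j = -1 := by
            show (if v j = true then (1:ℝ) else -1) = -1
            rw [if_neg hbv]
          rw [e1, e2] at h3
          norm_num at h3
        · exfalso
          have e1 : Sgn u j = -1 := by
            show (if u j = true then (1:ℝ) else -1) = -1
            rw [if_neg hbu]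
          have e2 : Sgn v j = 1 := by
            show (if v j = true then (1:ℝ) else -1) = 1
            rw [if_pos hbv]
          rw [e1, e2] at h3
          norm_num at h3
        · have hbu' : u j = false := by
            cases hx : u j
            · rfl
            · exact absurd hx hbu
          have hbv' : v j = false := by
            cases hx : v j
            · rfl
            · exact absurd hx hbv
          rw [hbu', hbv']
    have hmeasU := MeasureTheory.measure_biUnion_finset (μ := μ) hdisj (fun u _ => hFmeas u)
    have hsum_eq : ∑ u ∈ Finset.univ.filter (fun u : Fin p → Bool => cano u = u),
        (μ (F u)).toReal
        = (∑ u ∈ Finset.univ.filter (fun u : Fin p → Bool => cano u = u), μ (F u)).toReal :=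
      (ENNReal.toReal_sum (fun u _ => measure_ne_top μ _)).symm
    rw [hsum_eq, ← hmeasU]
    calc (μ (⋃ u ∈ Finset.univ.filter (fun u : Fin p → Bool => cano u = u), F u)).toReal
        ≤ (1 : ℝ≥0∞).toReal := ENNReal.toReal_mono ENNReal.one_ne_top prob_le_one
      _ = 1 := ENNReal.toReal_one
  -- final chain
  show ∫ ω, KF.FDP q N (fun j => σ j ω) ∂μ ≤ q
  calc ∫ ω, KF.FDP q N (fun j => σ j ω) ∂μ
      = ∑ b : Fin p → Bool, (μ (E b)).toReal * KF.FDP q N (Sgn b) := hint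
    _ = ∑ u : Fin p → Bool, ∑ b ∈ Finset.univ.filter (fun b => cano b = u),
          (μ (E b)).toReal * KF.FDP q N (Sgn b) := hgroup
    _ ≤ ∑ u : Fin p → Bool, q * (if cano u = u then (μ (F u)).toReal else 0) :=
        Finset.sum_le_sum fun u _ => hinner u
    _ = q * ∑ u : Fin p → Bool, (if cano u = u then (μ (F u)).toReal else 0) := by
        rw [Finset.mul_sum]
    _ ≤ q * 1 := mul_le_mul_of_nonneg_left hcanon_sum (le_of_lt hq0)
    _ = q := mul_one q
end

section
/- Let (X, X̃) be a pair of random vectors in R^p × R^p and let Y be a random variable, and let N = {j : X_j ⊥ Y | X_{-j}} be the set of null indices, where for S ⊆ {1,...,p}, swap(S) exchanges coordinates X_j and X̃_j for j ∈ S. If the coordinates X_j of X are mutually independent and X̃ is an i.i.d. copy of X independent of (X, Y), then for any S ⊆ N, the triple (X, X̃, Y)_{swap(S)} is equal in distribution to (X, X̃, Y). -/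
open MeasureTheory ProbabilityTheory
open scoped Classical

section Aux

variable {Ω : Type*} [mΩ : MeasurableSpace Ω] [StandardBorelSpace Ω]

/-- Rectangle computation: if `f ⊥ Y | g` (conditionally) and `f ⊥ g`, then
`μ (f⁻¹A ∩ (g⁻¹T ∩ Y⁻¹u)) = μ (f⁻¹A) * μ (g⁻¹T ∩ Y⁻¹u)`. -/
lemma aux_key {β : Type*} [mβ : MeasurableSpace β]
    (μ : Measure Ω) [IsProbabilityMeasure μ]
    (f : Ω → ℝ) (g : Ω → β) (Y : Ω → ℝ)
    (hf : Measurable f) (hg : Measurable g) (hY : Measurable Y)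
    (hle : MeasurableSpace.comap g mβ ≤ mΩ)
    (hci : CondIndepFun (MeasurableSpace.comap g mβ) hle f Y μ)
    (hind : IndepFun f g μ)
    (A : Set ℝ) (hA : MeasurableSet A) (T : Set β) (hT : MeasurableSet T)
    (u : Set ℝ) (hu : MeasurableSet u) :
    μ (f ⁻¹' A ∩ (g ⁻¹' T ∩ Y ⁻¹' u)) = μ (f ⁻¹' A) * μ (g ⁻¹' T ∩ Y ⁻¹' u) := by
  have hB' : MeasurableSet[MeasurableSpace.comap g mβ] (g ⁻¹' T) := ⟨T, hT, rfl⟩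
  have hB : MeasurableSet (g ⁻¹' T) := hle _ hB'
  have hAset : MeasurableSet (f ⁻¹' A) := hf hA
  have huset : MeasurableSet (Y ⁻¹' u) := hY hu
  have hint : Integrable ((f ⁻¹' A ∩ Y ⁻¹' u).indicator (fun _ => (1 : ℝ))) μ :=
    (integrable_const 1).indicator (hAset.inter huset)
  have hint2 : Integrable ((Y ⁻¹' u).indicator (fun _ => (1 : ℝ))) μ :=
    (integrable_const 1).indicator huset
  have hindep : Indep (MeasurableSpace.comap f inferInstance) (MeasurableSpace.comap g mβ) μ :=
    (IndepFun_iff_Indep _ _ _).mp hind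
  -- the conditional expectation of the indicator of `f ⁻¹' A` is constant
  have h1 : (μ⟦f ⁻¹' A | MeasurableSpace.comap g mβ⟧)
      =ᵐ[μ] fun _ => (μ (f ⁻¹' A)).toReal := by
    have hsm : StronglyMeasurable[MeasurableSpace.comap f inferInstance]
        ((f ⁻¹' A).indicator (fun _ => (1 : ℝ))) :=
      stronglyMeasurable_const.indicator ⟨A, hA, rfl⟩
    have hconst := condExp_indep_eq hf.comap_le hle hsm hindep
    refine hconst.trans ?_
    have : ∫ x, (f ⁻¹' A).indicator (fun _ => (1 : ℝ)) x ∂μ = (μ (f ⁻¹' A)).toReal := by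
      rw [integral_indicator hAset, setIntegral_const, smul_eq_mul, mul_one, measureReal_def]
    rw [this]
  have h2 := (condIndepFun_iff_condExp_inter_preimage_eq_mul hf hY).mp hci A u hA hu
  have e1 : (μ (g ⁻¹' T ∩ (f ⁻¹' A ∩ Y ⁻¹' u))).toReal
      = ∫ x in g ⁻¹' T, (μ⟦f ⁻¹' A ∩ Y ⁻¹' u | MeasurableSpace.comap g mβ⟧) x ∂μ := by
    rw [setIntegral_condExp hle hint hB', setIntegral_indicator (hAset.inter huset),
      setIntegral_const, smul_eq_mul, mul_one, measureReal_def]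
  have e2 : ∫ x in g ⁻¹' T, (μ⟦f ⁻¹' A ∩ Y ⁻¹' u | MeasurableSpace.comap g mβ⟧) x ∂μ
      = (μ (f ⁻¹' A)).toReal
          * ∫ x in g ⁻¹' T, (μ⟦Y ⁻¹' u | MeasurableSpace.comap g mβ⟧) x ∂μ := by
    rw [← integral_const_mul]
    refine setIntegral_congr_ae hB ?_
    filter_upwards [h2, h1] with ω hω h1ω _
    rw [hω, h1ω]
  have e3 : ∫ x in g ⁻¹' T, (μ⟦Y ⁻¹' u | MeasurableSpace.comap g mβ⟧) x ∂μ
      = (μ (g ⁻¹' T ∩ Y ⁻¹' u)).toReal := by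
    rw [setIntegral_condExp hle hint2 hB', setIntegral_indicator huset,
      setIntegral_const, smul_eq_mul, mul_one, measureReal_def]
  have efin : (μ (g ⁻¹' T ∩ (f ⁻¹' A ∩ Y ⁻¹' u))).toReal
      = ((μ (f ⁻¹' A)) * μ (g ⁻¹' T ∩ Y ⁻¹' u)).toReal := by
    rw [e1, e2, e3, ENNReal.toReal_mul]
  have hmain := (ENNReal.toReal_eq_toReal_iff' (measure_ne_top μ _)
    (ENNReal.mul_ne_top (measure_ne_top μ _) (measure_ne_top μ _))).mp efin
  calc μ (f ⁻¹' A ∩ (g ⁻¹' T ∩ Y ⁻¹' u))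
      = μ (g ⁻¹' T ∩ (f ⁻¹' A ∩ Y ⁻¹' u)) := by rw [Set.inter_left_comm]
    _ = _ := hmain

end Aux

/-- independent-coordinates case of Lemma 1 of Candès et al. 2018: if the
coordinates of `X` are mutually independent, `X̃` is an i.i.d. copy of `X` independent of
`(X, Y)`, and `S` is a subset of the null set `N = {j : X_j ⊥ Y | X_{-j}}`, then swapping
the coordinates in `S` leaves the joint distribution of `(X, X̃, Y)` unchanged. -/
theorem null_swap_invariance_indep_coords {Ω : Type*} [mΩ : MeasurableSpace Ω]
    [StandardBorelSpace Ω] [Nonempty Ω]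
    (μ : Measure Ω) [IsProbabilityMeasure μ] (p : ℕ)
    (X Xt : Ω → Fin p → ℝ) (Y : Ω → ℝ)
    (hX : Measurable X) (hXt : Measurable Xt) (hY : Measurable Y)
    (hmutindep : iIndepFun (fun j : Fin p => fun ω => X ω j) μ)
    (hcopy : Measure.map Xt μ = Measure.map X μ)
    (hXtindep : IndepFun Xt (fun ω => (X ω, Y ω)) μ)
    (hle : ∀ j : Fin p, MeasurableSpace.comap
      (fun ω => fun i : {i : Fin p // i ≠ j} => X ω (i : Fin p)) inferInstance ≤ mΩ)
    (S : Finset (Fin p))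
    (hnull : ∀ j ∈ S, CondIndepFun
      (MeasurableSpace.comap
        (fun ω => fun i : {i : Fin p // i ≠ j} => X ω (i : Fin p)) inferInstance)
      (hle j) (fun ω => X ω j) Y μ) :
    Measure.map (fun ω =>
        ((fun j : Fin p => if j ∈ S then Xt ω j else X ω j),
         (fun j : Fin p => if j ∈ S then X ω j else Xt ω j), Y ω)) μ =
      Measure.map (fun ω => (X ω, Xt ω, Y ω)) μ := by
  classical
  have hXj : ∀ i : Fin p, Measurable fun ω => X ω i := fun i => (measurable_pi_apply i).comp hX
  have hXtj : ∀ i : Fin p, Measurable fun ω => Xt ω i := fun i => (measurable_pi_apply i).comp hXt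
  -- the key one-coordinate independence computation
  have key : ∀ j ∈ S, ∀ (A : Set ℝ), MeasurableSet A →
      ∀ (T : Set ({i : Fin p // i ≠ j} → ℝ)), MeasurableSet T →
      ∀ (u : Set ℝ), MeasurableSet u →
      μ ((fun ω => X ω j) ⁻¹' A ∩
          ((fun ω => fun i : {i : Fin p // i ≠ j} => X ω (i : Fin p)) ⁻¹' T ∩ Y ⁻¹' u))
        = μ ((fun ω => X ω j) ⁻¹' A) *
            μ ((fun ω => fun i : {i : Fin p // i ≠ j} => X ω (i : Fin p)) ⁻¹' T ∩ Y ⁻¹' u) := by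
    intro j hj A hA T hT u hu
    have hgm : Measurable (fun ω => fun i : {i : Fin p // i ≠ j} => X ω (i : Fin p)) :=
      measurable_pi_lambda _ fun i => hXj i
    have hfin := hmutindep.indepFun_finset {j} ({j}ᶜ) disjoint_compl_right (fun i => hXj i)
    have hind : IndepFun (fun ω => X ω j)
        (fun ω => fun i : {i : Fin p // i ≠ j} => X ω (i : Fin p)) μ := by
      have := hfin.comp
        (φ := fun v : ({j} : Finset (Fin p)) → ℝ => v ⟨j, Finset.mem_singleton_self j⟩)
        (ψ := fun (v : (({j}ᶜ : Finset (Fin p)) : Finset (Fin p)) → ℝ)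
            (i : {i : Fin p // i ≠ j}) => v ⟨(i : Fin p), by
              simpa [Finset.mem_compl, Finset.mem_singleton] using i.2⟩)
        (measurable_pi_apply _ : Measurable fun v : ({j} : Finset (Fin p)) → ℝ =>
          v ⟨j, Finset.mem_singleton_self j⟩)
        (measurable_pi_lambda _ fun i => measurable_pi_apply _)
      exact this
    exact aux_key μ _ _ _ (hXj j) hgm hY (hle j) (hnull j hj) hind A hA T hT u hu
  -- peeling off the coordinates of `T ⊆ S` one by one
  have peel : ∀ T : Finset (Fin p), T ⊆ S → ∀ G : Fin p → Set ℝ, (∀ j, MeasurableSet (G j)) →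
      ∀ u : Set ℝ, MeasurableSet u →
      μ ((⋂ j, (fun ω => X ω j) ⁻¹' G j) ∩ Y ⁻¹' u)
        = (∏ j ∈ T, μ ((fun ω => X ω j) ⁻¹' G j)) *
            μ ((⋂ j, (fun ω => X ω j) ⁻¹' (if j ∈ T then Set.univ else G j)) ∩ Y ⁻¹' u) := by
    intro T
    induction T using Finset.induction_on with
    | empty => intro _ G hG u hu; simp
    | @insert j T' hj IH =>
      intro hsub G hG u hu
      have hj' : j ∈ S := hsub (Finset.mem_insert_self j T')
      have hT'sub : T' ⊆ S := fun x hx => hsub (Finset.mem_insert_of_mem hx)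
      rw [IH hT'sub G hG u hu]
      have hset : (⋂ k, (fun ω => X ω k) ⁻¹' (if k ∈ T' then Set.univ else G k)) ∩ Y ⁻¹' u
          = (fun ω => X ω j) ⁻¹' (G j) ∩
            ((fun ω => fun i : {i : Fin p // i ≠ j} => X ω (i : Fin p)) ⁻¹'
              (Set.univ.pi fun i : {i : Fin p // i ≠ j} =>
                if (i : Fin p) ∈ T' then Set.univ else G (i : Fin p)) ∩ Y ⁻¹' u) := by
        ext ω
        simp only [Set.mem_inter_iff, Set.mem_iInter, Set.mem_preimage, Set.mem_univ_pi]
        constructor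
        · rintro ⟨h1, h2⟩
          refine ⟨?_, fun i => h1 (i : Fin p), h2⟩
          simpa [hj] using h1 j
        · rintro ⟨h0, h1, h2⟩
          refine ⟨fun k => ?_, h2⟩
          by_cases hk : k = j
          · subst hk; simpa [hj] using h0
          · exact h1 ⟨k, hk⟩
      have hHmeas : MeasurableSet (Set.univ.pi fun i : {i : Fin p // i ≠ j} =>
          if (i : Fin p) ∈ T' then Set.univ else G (i : Fin p)) := by
        refine MeasurableSet.univ_pi fun i => ?_
        by_cases h : (i : Fin p) ∈ T'
        · simp [h]
        · simpa [h] using hG (i : Fin p)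
      rw [hset, key j hj' (G j) (hG j) _ hHmeas u hu]
      have hset2 : (fun ω => fun i : {i : Fin p // i ≠ j} => X ω (i : Fin p)) ⁻¹'
            (Set.univ.pi fun i : {i : Fin p // i ≠ j} =>
              if (i : Fin p) ∈ T' then Set.univ else G (i : Fin p)) ∩ Y ⁻¹' u
          = (⋂ k, (fun ω => X ω k) ⁻¹' (if k ∈ insert j T' then Set.univ else G k)) ∩ Y ⁻¹' u := by
        ext ω
        simp only [Set.mem_inter_iff, Set.mem_iInter, Set.mem_preimage, Set.mem_univ_pi]
        constructor
        · rintro ⟨h1, h2⟩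
          refine ⟨fun k => ?_, h2⟩
          by_cases hk : k = j
          · simp [hk]
          · have := h1 ⟨k, hk⟩
            by_cases hkT : k ∈ T'
            · simp [Finset.mem_insert, hkT]
            · simp only [if_neg hkT] at this
              simp [Finset.mem_insert, hk, hkT, this]
        · rintro ⟨h1, h2⟩
          refine ⟨fun i => ?_, h2⟩
          have := h1 (i : Fin p)
          by_cases hiT : (i : Fin p) ∈ T'
          · simp [hiT]
          · rw [if_neg (by simp [Finset.mem_insert, i.2, hiT])] at this
            rw [if_neg hiT]
            exact this
      rw [hset2, Finset.prod_insert hj]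
      ring
  -- measurability of the two maps
  have hF1 : Measurable (fun ω => fun j : Fin p => if j ∈ S then Xt ω j else X ω j) :=
    measurable_pi_lambda _ fun j => by
      by_cases h : j ∈ S
      · simpa [h] using hXtj j
      · simpa [h] using hXj j
  have hF2 : Measurable (fun ω => fun j : Fin p => if j ∈ S then X ω j else Xt ω j) :=
    measurable_pi_lambda _ fun j => by
      by_cases h : j ∈ S
      · simpa [h] using hXj j
      · simpa [h] using hXtj j
  have hmap1 : Measurable (fun ω =>
      ((fun j : Fin p => if j ∈ S then Xt ω j else X ω j),
       (fun j : Fin p => if j ∈ S then X ω j else Xt ω j), Y ω)) :=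
    hF1.prodMk (hF2.prodMk hY)
  have hmap2 : Measurable (fun ω => (X ω, Xt ω, Y ω)) := hX.prodMk (hXt.prodMk hY)
  haveI : IsProbabilityMeasure (Measure.map (fun ω =>
      ((fun j : Fin p => if j ∈ S then Xt ω j else X ω j),
       (fun j : Fin p => if j ∈ S then X ω j else Xt ω j), Y ω)) μ) :=
    Measure.isProbabilityMeasure_map hmap1.aemeasurable
  haveI : IsProbabilityMeasure (Measure.map (fun ω => (X ω, Xt ω, Y ω)) μ) :=
    Measure.isProbabilityMeasure_map hmap2.aemeasurable
  -- the generating π-system of triple rectangles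
  have hspan_pi : IsCountablySpanning
      (Set.pi Set.univ '' Set.pi Set.univ (fun _ : Fin p => {s : Set ℝ | MeasurableSet s})) :=
    IsCountablySpanning.pi fun _ => isCountablySpanning_measurableSet
  have hgen_inner : MeasurableSpace.generateFrom
      (Set.image2 (· ×ˢ ·)
        (Set.pi Set.univ '' Set.pi Set.univ (fun _ : Fin p => {s : Set ℝ | MeasurableSet s}))
        {s : Set ℝ | MeasurableSet s}) = Prod.instMeasurableSpace :=
    generateFrom_eq_prod generateFrom_pi MeasurableSpace.generateFrom_measurableSet
      hspan_pi isCountablySpanning_measurableSet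
  have hspan_inner : IsCountablySpanning
      (Set.image2 (· ×ˢ ·)
        (Set.pi Set.univ '' Set.pi Set.univ (fun _ : Fin p => {s : Set ℝ | MeasurableSet s}))
        {s : Set ℝ | MeasurableSet s}) :=
    hspan_pi.prod isCountablySpanning_measurableSet
  have hgen_outer : MeasurableSpace.generateFrom
      (Set.image2 (· ×ˢ ·)
        (Set.pi Set.univ '' Set.pi Set.univ (fun _ : Fin p => {s : Set ℝ | MeasurableSet s}))
        (Set.image2 (· ×ˢ ·)
          (Set.pi Set.univ '' Set.pi Set.univ (fun _ : Fin p => {s : Set ℝ | MeasurableSet s}))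
          {s : Set ℝ | MeasurableSet s})) = Prod.instMeasurableSpace :=
    generateFrom_eq_prod generateFrom_pi hgen_inner hspan_pi hspan_inner
  have hpiC : IsPiSystem
      (Set.image2 (· ×ˢ ·)
        (Set.pi Set.univ '' Set.pi Set.univ (fun _ : Fin p => {s : Set ℝ | MeasurableSet s}))
        (Set.image2 (· ×ˢ ·)
          (Set.pi Set.univ '' Set.pi Set.univ (fun _ : Fin p => {s : Set ℝ | MeasurableSet s}))
          {s : Set ℝ | MeasurableSet s})) :=
    isPiSystem_pi.prod (isPiSystem_pi.prod MeasurableSpace.isPiSystem_measurableSet)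
  refine ext_of_generate_finite _ hgen_outer.symm hpiC ?_ (by simp [measure_univ])
  rintro _ ⟨s, hs, _, ⟨t, ht, u, hu, rfl⟩, rfl⟩
  obtain ⟨A, hA, rfl⟩ := hs
  obtain ⟨B, hB, rfl⟩ := ht
  have hA' : ∀ j, MeasurableSet (A j) := fun j => hA j (Set.mem_univ j)
  have hB' : ∀ j, MeasurableSet (B j) := fun j => hB j (Set.mem_univ j)
  have humeas : MeasurableSet (u : Set ℝ) := hu
  have hbigmeas : MeasurableSet
      ((Set.univ.pi A) ×ˢ ((Set.univ.pi B) ×ˢ u)) :=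
    (MeasurableSet.univ_pi hA').prod ((MeasurableSet.univ_pi hB').prod humeas)
  rw [Measure.map_apply hmap1 hbigmeas, Measure.map_apply hmap2 hbigmeas]
  -- rewrite both preimages as intersections
  have hL : (fun ω =>
        ((fun j : Fin p => if j ∈ S then Xt ω j else X ω j),
         (fun j : Fin p => if j ∈ S then X ω j else Xt ω j), Y ω)) ⁻¹'
      ((Set.univ.pi A) ×ˢ ((Set.univ.pi B) ×ˢ u))
      = Xt ⁻¹' (Set.univ.pi fun j => if j ∈ S then A j else B j) ∩
        ((fun ω => (X ω, Y ω)) ⁻¹'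
          ((Set.univ.pi fun j => if j ∈ S then B j else A j) ×ˢ u)) := by
    ext ω
    simp only [Set.mem_preimage, Set.mem_prod, Set.mem_univ_pi, Set.mem_inter_iff]
    constructor
    · rintro ⟨h1, h2, h3⟩
      refine ⟨fun j => ?_, fun j => ?_, h3⟩
      · by_cases hj : j ∈ S
        · simpa [hj] using h1 j
        · simpa [hj] using h2 j
      · by_cases hj : j ∈ S
        · simpa [hj] using h2 j
        · simpa [hj] using h1 j
    · rintro ⟨h1, h2, h3⟩
      refine ⟨fun j => ?_, fun j => ?_, h3⟩
      · by_cases hj : j ∈ S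
        · simpa [hj] using h1 j
        · simpa [hj] using h2 j
      · by_cases hj : j ∈ S
        · simpa [hj] using h2 j
        · simpa [hj] using h1 j
  have hR : (fun ω => (X ω, Xt ω, Y ω)) ⁻¹' ((Set.univ.pi A) ×ˢ ((Set.univ.pi B) ×ˢ u))
      = Xt ⁻¹' (Set.univ.pi B) ∩
        ((fun ω => (X ω, Y ω)) ⁻¹' ((Set.univ.pi A) ×ˢ u)) := by
    ext ω
    simp only [Set.mem_preimage, Set.mem_prod, Set.mem_univ_pi, Set.mem_inter_iff]
    tauto
  rw [hL, hR]
  have hCmeas : MeasurableSet (Set.univ.pi fun j => if j ∈ S then A j else B j) :=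
    MeasurableSet.univ_pi fun j => by
      by_cases hj : j ∈ S
      · simpa [hj] using hA' j
      · simpa [hj] using hB' j
  have hDmeas : MeasurableSet (Set.univ.pi fun j => if j ∈ S then B j else A j) :=
    MeasurableSet.univ_pi fun j => by
      by_cases hj : j ∈ S
      · simpa [hj] using hB' j
      · simpa [hj] using hA' j
  rw [hXtindep.measure_inter_preimage_eq_mul _ _ hCmeas (hDmeas.prod humeas),
    hXtindep.measure_inter_preimage_eq_mul _ _ (MeasurableSet.univ_pi hB')
      ((MeasurableSet.univ_pi hA').prod humeas)]
  -- the Xt marginal of a box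
  have hXtbox : ∀ (G : Fin p → Set ℝ), (∀ j, MeasurableSet (G j)) →
      μ (Xt ⁻¹' Set.univ.pi G) = ∏ j, μ ((fun ω => X ω j) ⁻¹' G j) := by
    intro G hG
    have h1 : μ (Xt ⁻¹' Set.univ.pi G) = μ (X ⁻¹' Set.univ.pi G) := by
      rw [← Measure.map_apply hXt (MeasurableSet.univ_pi hG),
        ← Measure.map_apply hX (MeasurableSet.univ_pi hG), hcopy]
    have h2 : X ⁻¹' Set.univ.pi G = ⋂ j, (fun ω => X ω j) ⁻¹' G j := by
      ext ω; simp [Set.mem_univ_pi]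
    rw [h1, h2]
    exact hmutindep.meas_iInter fun j => ⟨G j, hG j, rfl⟩
  -- the (X, Y) part of a box
  have hXside : ∀ (G : Fin p → Set ℝ), (∀ j, MeasurableSet (G j)) →
      μ ((fun ω => (X ω, Y ω)) ⁻¹' ((Set.univ.pi G) ×ˢ u))
        = (∏ j ∈ S, μ ((fun ω => X ω j) ⁻¹' G j)) *
            μ ((⋂ j, (fun ω => X ω j) ⁻¹' (if j ∈ S then Set.univ else G j)) ∩ Y ⁻¹' u) := by
    intro G hG
    have h2 : (fun ω => (X ω, Y ω)) ⁻¹' ((Set.univ.pi G) ×ˢ u)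
        = (⋂ j, (fun ω => X ω j) ⁻¹' G j) ∩ Y ⁻¹' u := by
      ext ω; simp [Set.mem_univ_pi]
    rw [h2]
    exact peel S (Finset.Subset.refl S) G hG u humeas
  rw [hXtbox _ (fun j => by
      by_cases hj : j ∈ S
      · simpa [hj] using hA' j
      · simpa [hj] using hB' j),
    hXtbox _ hB', hXside _ (fun j => by
      by_cases hj : j ∈ S
      · simpa [hj] using hB' j
      · simpa [hj] using hA' j),
    hXside _ hA']
  -- identify the two remainder sets
  have hrem : (⋂ j, (fun ω => X ω j) ⁻¹'
        (if j ∈ S then Set.univ else if j ∈ S then B j else A j))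
      = ⋂ j, (fun ω => X ω j) ⁻¹' (if j ∈ S then Set.univ else A j) := by
    refine Set.iInter_congr fun j => ?_
    by_cases hj : j ∈ S <;> simp [hj]
  rw [hrem]
  -- split the products over `S` and its complement
  have hCsplit : ∏ j, μ ((fun ω => X ω j) ⁻¹' (if j ∈ S then A j else B j))
      = (∏ j ∈ Finset.univ \ S, μ ((fun ω => X ω j) ⁻¹' B j)) *
          ∏ j ∈ S, μ ((fun ω => X ω j) ⁻¹' A j) := by
    rw [← Finset.prod_sdiff (Finset.subset_univ S)]
    congr 1
    · exact Finset.prod_congr rfl fun j hj => by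
        rw [if_neg (Finset.mem_sdiff.mp hj).2]
    · exact Finset.prod_congr rfl fun j hj => by rw [if_pos hj]
  have hBsplit : ∏ j, μ ((fun ω => X ω j) ⁻¹' B j)
      = (∏ j ∈ Finset.univ \ S, μ ((fun ω => X ω j) ⁻¹' B j)) *
          ∏ j ∈ S, μ ((fun ω => X ω j) ⁻¹' B j) :=
    (Finset.prod_sdiff (Finset.subset_univ S)).symm
  have hDS : ∏ j ∈ S, μ ((fun ω => X ω j) ⁻¹' (if j ∈ S then B j else A j))
      = ∏ j ∈ S, μ ((fun ω => X ω j) ⁻¹' B j) :=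
    Finset.prod_congr rfl fun j hj => by rw [if_pos hj]
  rw [hCsplit, hBsplit, hDS]
  ring
end

section
/- Let G = [[Σ, Σ - D], [Σ - D, Σ]] be a 2p × 2p block matrix with Σ symmetric positive definite and D = diag(s) for s ≥ 0. Then G ⪰ 0 if and only if the matrix 2D - D Σ^{-1} D ⪰ 0, which holds if and only if 2Σ - D ⪰ 0. -/
open Matrix

/-- for `Σ` symmetric positive definite and `D = diag(s)` with `s ≥ 0`,
the block matrix `G = [[Σ, Σ-D],[Σ-D, Σ]]` is positive semidefinite if and only if
`2D - DΣ⁻¹D ⪰ 0`, which in turn holds if and only if `2Σ - D ⪰ 0`. -/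
theorem knockoff_joint_covariance_psd_iff (p : ℕ)
    (Sig : Matrix (Fin p) (Fin p) ℝ) (hSig : Sig.PosDef)
    (s : Fin p → ℝ) (hs : ∀ i, 0 ≤ s i) :
    ((Matrix.fromBlocks Sig (Sig - Matrix.diagonal s) (Sig - Matrix.diagonal s)
        Sig).PosSemidef ↔
      ((2 : ℝ) • Matrix.diagonal s -
        Matrix.diagonal s * Sig⁻¹ * Matrix.diagonal s).PosSemidef) ∧
    (((2 : ℝ) • Matrix.diagonal s -
        Matrix.diagonal s * Sig⁻¹ * Matrix.diagonal s).PosSemidef ↔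
      ((2 : ℝ) • Sig - Matrix.diagonal s).PosSemidef) := by
  set D : Matrix (Fin p) (Fin p) ℝ := Matrix.diagonal s with hDdef
  have hDpsd : D.PosSemidef := PosSemidef.diagonal (fun i => hs i)
  have hB : (Sig - D)ᴴ = Sig - D := by
    rw [conjTranspose_sub, hSig.isHermitian.eq, diagonal_conjTranspose]
    simp [hDdef]
  -- Schur complement identity
  have hdet : IsUnit Sig.det := isUnit_iff_ne_zero.mpr hSig.det_pos.ne'
  have hinv1 : Sig * Sig⁻¹ = 1 := Matrix.mul_nonsing_inv _ hdet
  have hcan : D * Sig⁻¹ * Sig = D := Matrix.nonsing_inv_mul_cancel_right _ _ hdet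
  haveI : Invertible Sig := Sig.invertibleOfIsUnitDet hdet
  have hSigT : Sigᵀ = Sig := by simpa using hSig.isHermitian.eq
  have hschur : Sig - (Sig - D) * Sig⁻¹ * (Sig - D)
      = (2 : ℝ) • D - D * Sig⁻¹ * D := by
    have h : (Sig - D) * Sig⁻¹ * (Sig - D)
        = Sig * Sig⁻¹ * Sig - Sig * Sig⁻¹ * D - D * Sig⁻¹ * Sig + D * Sig⁻¹ * D := by
      simp only [Matrix.sub_mul, Matrix.mul_sub]
      abel
    rw [h, hinv1, hcan, Matrix.one_mul, Matrix.one_mul, two_smul]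
    abel
  -- first iff
  have hfirst : (Matrix.fromBlocks Sig (Sig - D) (Sig - D) Sig).PosSemidef ↔
      ((2 : ℝ) • D - D * Sig⁻¹ * D).PosSemidef := by
    rw [← hschur]
    nth_rewrite 2 3 [← hB]
    exact PosDef.fromBlocks₁₁ _ _ hSig
  -- G psd ↔ (2Σ - D) psd
  have hGN : (Matrix.fromBlocks Sig (Sig - D) (Sig - D) Sig).PosSemidef ↔
      ((2 : ℝ) • Sig - D).PosSemidef := by
    constructor
    · intro hG
      refine PosSemidef.of_dotProduct_mulVec_nonneg ?_ ?_
      · simp [Matrix.IsHermitian, conjTranspose_sub, conjTranspose_smul,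
          hSig.isHermitian.eq, diagonal_conjTranspose, hSigT, diagonal_transpose, hDdef]
      · intro x
        have h := hG.dotProduct_mulVec_nonneg (Sum.elim x x)
        simp only [star_trivial, fromBlocks_mulVec, sumElim_dotProduct_sumElim, Sum.elim_comp_inl, Sum.elim_comp_inr,
          Matrix.sub_mulVec, dotProduct_add, dotProduct_sub] at h
        simp only [star_trivial, Matrix.sub_mulVec, smul_mulVec,
          dotProduct_sub, dotProduct_smul, smul_eq_mul]
        linarith
    · intro hN
      refine PosSemidef.of_dotProduct_mulVec_nonneg ?_ ?_
      · rw [Matrix.IsHermitian, fromBlocks_conjTranspose, hB, hSig.isHermitian.eq]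
      · intro z
        have hz : z = Sum.elim (z ∘ Sum.inl) (z ∘ Sum.inr) := by
          funext i; cases i <;> rfl
        set x : Fin p → ℝ := z ∘ Sum.inl
        set y : Fin p → ℝ := z ∘ Sum.inr
        have h1 := hN.dotProduct_mulVec_nonneg (x + y)
        have h2 := hDpsd.dotProduct_mulVec_nonneg (x - y)
        simp only [star_trivial, Matrix.sub_mulVec, smul_mulVec,
          mulVec_add, mulVec_sub, dotProduct_add, dotProduct_sub, add_dotProduct,
          sub_dotProduct, dotProduct_smul, smul_eq_mul] at h1 h2
        rw [hz]
        simp only [star_trivial, fromBlocks_mulVec, sumElim_dotProduct_sumElim, Sum.elim_comp_inl, Sum.elim_comp_inr,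
          Matrix.sub_mulVec, dotProduct_add, dotProduct_sub]
        linarith
  exact ⟨hfirst, hfirst.symm.trans hGN⟩
end
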